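/- arXiv:2505.12462 — 11 statements merged into one kernel-verified Lean document; each statement's English description precedes it below -/
import Mathlib

section
/- Let S be a nonempty finite type, p₀ an element of the standard simplex on S, and R ∈ [0,1]. Let K = { (1−R) • p₀ + R • q | q in the standard simplex on S } (the contamination uncertainty set of radius R around p₀). Then for every h : S → ℝ, the support function satisfies σ_K(h) = sInf { ∑ s, p s * h s | p ∈ K } = (1−R) * (∑ s, p₀ s * h s) + R * (min_s h s). -/
open Finset

noncomputable def supNorm {X : Type*} [Fintype X] [Nonempty X] (v : X → ℝ) : ℝ :=
  Finset.univ.sup' Finset.univ_nonempty fun x => |v x|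

noncomputable def spanSN {X : Type*} [Fintype X] [Nonempty X] (v : X → ℝ) : ℝ :=
  (Finset.univ.sup' Finset.univ_nonempty v) - (Finset.univ.inf' Finset.univ_nonempty v)

/-- Closed form of the support function of a contamination uncertainty set. -/
theorem stmt1 {S : Type*} [Fintype S] [Nonempty S]
    (p₀ : S → ℝ) (hp₀ : p₀ ∈ stdSimplex ℝ S)
    (R : ℝ) (hR0 : 0 ≤ R) (hR1 : R ≤ 1)
    (K : Set (S → ℝ))
    (hK : K = {p | ∃ q ∈ stdSimplex ℝ S, p = (1 - R) • p₀ + R • q})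
    (h : S → ℝ) :
    sInf {x : ℝ | ∃ p ∈ K, x = ∑ s, p s * h s} =
      (1 - R) * (∑ s, p₀ s * h s) +
        R * (Finset.univ.inf' Finset.univ_nonempty h) := by
  classical
  set m := Finset.univ.inf' Finset.univ_nonempty h with hm
  obtain ⟨s₀, -, hs₀⟩ := Finset.exists_mem_eq_inf' Finset.univ_nonempty h
  -- the element achieving the min
  set q₀ : S → ℝ := fun t => if t = s₀ then 1 else 0 with hq₀
  have hq₀mem : q₀ ∈ stdSimplex ℝ S := by
    constructor
    · intro t; simp only [hq₀]; split <;> norm_num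
    · simp [hq₀]
  have hsum : ∀ q : S → ℝ, ∑ s, ((1 - R) • p₀ + R • q) s * h s
      = (1 - R) * (∑ s, p₀ s * h s) + R * ∑ s, q s * h s := by
    intro q
    rw [Finset.mul_sum, Finset.mul_sum, ← Finset.sum_add_distrib]
    apply Finset.sum_congr rfl
    intro s _
    simp only [Pi.add_apply, Pi.smul_apply, smul_eq_mul]
    ring
  have hq₀sum : ∑ s, q₀ s * h s = m := by
    simp [hq₀, hm, hs₀]
  -- key: elements of the set
  have hlow : ∀ x ∈ {x : ℝ | ∃ p ∈ K, x = ∑ s, p s * h s},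
      (1 - R) * (∑ s, p₀ s * h s) + R * m ≤ x := by
    rintro x ⟨p, hp, rfl⟩
    rw [hK] at hp
    obtain ⟨q, hq, rfl⟩ := hp
    rw [hsum]
    have hqh : m ≤ ∑ s, q s * h s := by
      calc m = ∑ s, q s * m := by rw [← Finset.sum_mul, hq.2, one_mul]
        _ ≤ ∑ s, q s * h s := by
          apply Finset.sum_le_sum
          intro i _
          exact mul_le_mul_of_nonneg_left (Finset.inf'_le _ (Finset.mem_univ i)) (hq.1 i)
    have := mul_le_mul_of_nonneg_left hqh hR0
    linarith
  have hmemb : (1 - R) * (∑ s, p₀ s * h s) + R * m ∈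
      {x : ℝ | ∃ p ∈ K, x = ∑ s, p s * h s} := by
    refine ⟨(1 - R) • p₀ + R • q₀, ?_, ?_⟩
    · rw [hK]; exact ⟨q₀, hq₀mem, rfl⟩
    · rw [hsum, hq₀sum]
  apply le_antisymm
  · exact csInf_le ⟨_, hlow⟩ hmemb
  · exact le_csInf ⟨_, hmemb⟩ hlow
end

section
/- For all Q, Q' : S × A → ℝ and every pair (s,a): min_{(s',a')} (Q(s',a') − Q'(s',a')) ≤ (𝒯 Q)(s,a) − (𝒯 Q')(s,a) ≤ max_{(s',a')} (Q(s',a') − Q'(s',a')). Consequently the robust Bellman operator is a nonexpansion in both the span seminorm and the sup norm: Sp(𝒯 Q − 𝒯 Q') ≤ Sp(Q − Q') and ‖𝒯 Q − 𝒯 Q'‖∞ ≤ ‖Q − Q'‖∞. -/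
open Finset

noncomputable def sigma' {S A : Type*} [Fintype S] (P : S → A → Set (S → ℝ))
    (h : S → ℝ) (s : S) (a : A) : ℝ :=
  sInf {x : ℝ | ∃ p ∈ P s a, x = ∑ s', p s' * h s'}

noncomputable def bellman {S A : Type*} [Fintype S] [Fintype A] [Nonempty A]
    (P : S → A → Set (S → ℝ)) (r : S → A → ℝ) (Q : S × A → ℝ) : S × A → ℝ :=
  fun sa => r sa.1 sa.2 +
    sigma' P (fun s' => Finset.univ.sup' Finset.univ_nonempty fun a' => Q (s', a')) sa.1 sa.2

lemma simplex_sum_le {S : Type*} [Fintype S] {p : S → ℝ} (hp : p ∈ stdSimplex ℝ S)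
    {h : S → ℝ} {M : ℝ} (hM : ∀ s, h s ≤ M) : ∑ s, p s * h s ≤ M := by
  calc ∑ s, p s * h s ≤ ∑ s, p s * M :=
        Finset.sum_le_sum fun s _ => mul_le_mul_of_nonneg_left (hM s) (hp.1 s)
    _ = M := by rw [← Finset.sum_mul, hp.2, one_mul]

lemma simplex_le_sum {S : Type*} [Fintype S] {p : S → ℝ} (hp : p ∈ stdSimplex ℝ S)
    {h : S → ℝ} {m : ℝ} (hm : ∀ s, m ≤ h s) : m ≤ ∑ s, p s * h s := by
  calc m = ∑ s, p s * m := by rw [← Finset.sum_mul, hp.2, one_mul]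
    _ ≤ ∑ s, p s * h s :=
        Finset.sum_le_sum fun s _ => mul_le_mul_of_nonneg_left (hm s) (hp.1 s)

lemma sigma_bddBelow {S A : Type*} [Fintype S] [Nonempty S] (P : S → A → Set (S → ℝ))
    (hsub : ∀ s a, P s a ⊆ stdSimplex ℝ S) (h : S → ℝ) (s : S) (a : A) :
    BddBelow {x : ℝ | ∃ p ∈ P s a, x = ∑ s', p s' * h s'} := by
  refine ⟨Finset.univ.inf' Finset.univ_nonempty h, ?_⟩
  rintro x ⟨p, hp, rfl⟩
  exact simplex_le_sum (hsub s a hp) fun s' => Finset.inf'_le _ (Finset.mem_univ s')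

lemma sigma_sub_le {S A : Type*} [Fintype S] [Nonempty S] (P : S → A → Set (S → ℝ))
    (hne : ∀ s a, (P s a).Nonempty) (hsub : ∀ s a, P s a ⊆ stdSimplex ℝ S)
    (h h' : S → ℝ) (s : S) (a : A) {M : ℝ} (hM : ∀ s', h s' - h' s' ≤ M) :
    sigma' P h s a - sigma' P h' s a ≤ M := by
  obtain ⟨p₀, hp₀⟩ := hne s a
  have hB'ne : {x : ℝ | ∃ p ∈ P s a, x = ∑ s', p s' * h' s'}.Nonempty :=
    ⟨_, p₀, hp₀, rfl⟩
  have key : sigma' P h s a - M ≤ sigma' P h' s a := by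
    unfold sigma'
    apply le_csInf hB'ne
    rintro x ⟨p, hp, rfl⟩
    have h1 : sInf {x : ℝ | ∃ p ∈ P s a, x = ∑ s', p s' * h s'} ≤ ∑ s', p s' * h s' :=
      csInf_le (sigma_bddBelow P hsub h s a) ⟨p, hp, rfl⟩
    have h2 : ∑ s', p s' * h s' - ∑ s', p s' * h' s' ≤ M := by
      have := simplex_sum_le (hsub s a hp) (h := fun s' => h s' - h' s') hM
      rw [← Finset.sum_sub_distrib]
      simpa [mul_sub] using this
    linarith
  linarith

/-- The robust Bellman operator is sandwiched by the min/max of the pointwise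
difference, and hence is a nonexpansion in both the span seminorm and the sup norm. -/
theorem stmt2 {S A : Type*} [Fintype S] [Fintype A] [Nonempty S] [Nonempty A]
    (P : S → A → Set (S → ℝ))
    (hne : ∀ s a, (P s a).Nonempty)
    (hsub : ∀ s a, P s a ⊆ stdSimplex ℝ S)
    (r : S → A → ℝ) :
    ∀ Q Q' : S × A → ℝ,
      (∀ sa : S × A,
        (Finset.univ.inf' Finset.univ_nonempty fun sa' : S × A => Q sa' - Q' sa') ≤
          bellman P r Q sa - bellman P r Q' sa ∧
        bellman P r Q sa - bellman P r Q' sa ≤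
          (Finset.univ.sup' Finset.univ_nonempty fun sa' : S × A => Q sa' - Q' sa')) ∧
      spanSN (bellman P r Q - bellman P r Q') ≤ spanSN (Q - Q') ∧
      supNorm (bellman P r Q - bellman P r Q') ≤ supNorm (Q - Q') := by
  intro Q Q'
  set m : ℝ := Finset.univ.inf' Finset.univ_nonempty fun sa' : S × A => Q sa' - Q' sa'
  set M : ℝ := Finset.univ.sup' Finset.univ_nonempty fun sa' : S × A => Q sa' - Q' sa'
  set h : S → ℝ := fun s' => Finset.univ.sup' Finset.univ_nonempty fun a' => Q (s', a')
  set h' : S → ℝ := fun s' => Finset.univ.sup' Finset.univ_nonempty fun a' => Q' (s', a')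
  have hup : ∀ s', h s' - h' s' ≤ M := by
    intro s'
    rw [sub_le_iff_le_add]
    apply Finset.sup'_le
    intro a' _
    have h1 : Q (s', a') - Q' (s', a') ≤ M :=
      Finset.le_sup' (fun sa' : S × A => Q sa' - Q' sa') (Finset.mem_univ (s', a'))
    have h2 : Q' (s', a') ≤ h' s' :=
      Finset.le_sup' (fun a'' => Q' (s', a'')) (Finset.mem_univ a')
    linarith
  have hdown : ∀ s', h' s' - h s' ≤ -m := by
    intro s'
    rw [sub_le_iff_le_add]
    apply Finset.sup'_le
    intro a' _
    have h1 : m ≤ Q (s', a') - Q' (s', a') :=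
      Finset.inf'_le (fun sa' : S × A => Q sa' - Q' sa') (Finset.mem_univ (s', a'))
    have h2 : Q (s', a') ≤ h s' :=
      Finset.le_sup' (fun a'' => Q (s', a'')) (Finset.mem_univ a')
    linarith
  have hdiff : ∀ sa : S × A,
      bellman P r Q sa - bellman P r Q' sa = sigma' P h sa.1 sa.2 - sigma' P h' sa.1 sa.2 := by
    intro sa; simp only [bellman]; ring
  have part1 : ∀ sa : S × A,
      m ≤ bellman P r Q sa - bellman P r Q' sa ∧
      bellman P r Q sa - bellman P r Q' sa ≤ M := by
    intro sa
    rw [hdiff sa]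
    constructor
    · have := sigma_sub_le P hne hsub h' h sa.1 sa.2 hdown
      linarith
    · exact sigma_sub_le P hne hsub h h' sa.1 sa.2 hup
  refine ⟨part1, ?_, ?_⟩
  · unfold spanSN
    have hs : (Finset.univ.sup' Finset.univ_nonempty (bellman P r Q - bellman P r Q')) ≤ M :=
      Finset.sup'_le _ _ fun sa _ => (part1 sa).2
    have hi : m ≤ (Finset.univ.inf' Finset.univ_nonempty (bellman P r Q - bellman P r Q')) :=
      Finset.le_inf' _ _ fun sa _ => (part1 sa).1
    simp only [Pi.sub_apply] at hs hi ⊢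
    linarith
  · have hMle : M ≤ supNorm (Q - Q') := by
      apply Finset.sup'_le
      intro x _
      have hx : |(Q - Q') x| ≤ supNorm (Q - Q') :=
        Finset.le_sup' (fun y => |(Q - Q') y|) (Finset.mem_univ x)
      simp only [Pi.sub_apply] at hx
      exact le_trans (le_abs_self _) hx
    have hmge : -supNorm (Q - Q') ≤ m := by
      apply Finset.le_inf'
      intro x _
      have hx : |(Q - Q') x| ≤ supNorm (Q - Q') :=
        Finset.le_sup' (fun y => |(Q - Q') y|) (Finset.mem_univ x)
      simp only [Pi.sub_apply] at hx
      rw [abs_le] at hx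
      linarith [hx.1]
    apply Finset.sup'_le
    intro sa _
    obtain ⟨l, u⟩ := part1 sa
    rw [abs_le]
    simp only [Pi.sub_apply]
    constructor <;> linarith
end

section
/- Let γ ∈ [0,1) and r : S → A → ℝ. Then there exists a unique V : S → ℝ such that V s = max_a ( r s a + γ * σ V (s,a) ) for every state s. Moreover, the robust discounted Bellman operator V ↦ (s ↦ max_a ( r s a + γ * σ V (s,a) )) is a γ-contraction with respect to ‖·‖∞. -/
open Finset

lemma abs_le_supNorm {X : Type*} [Fintype X] [Nonempty X] (v : X → ℝ) (x : X) :
    |v x| ≤ supNorm v := by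
  unfold supNorm
  exact Finset.le_sup' (fun x => |v x|) (Finset.mem_univ x)

lemma supNorm_nonneg {X : Type*} [Fintype X] [Nonempty X] (v : X → ℝ) : 0 ≤ supNorm v :=
  le_trans (abs_nonneg _) (abs_le_supNorm v (Classical.arbitrary X))

lemma sigma_le_sigma_add {S A : Type*} [Fintype S] [Nonempty S]
    (P : S → A → Set (S → ℝ)) (hne : ∀ s a, (P s a).Nonempty)
    (hsub : ∀ s a, P s a ⊆ stdSimplex ℝ S) (V W : S → ℝ) (s : S) (a : A) :
    sigma' P V s a ≤ sigma' P W s a + supNorm (V - W) := by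
  set c := supNorm (V - W)
  have hbdd : BddBelow {x : ℝ | ∃ p ∈ P s a, x = ∑ s', p s' * V s'} := by
    refine ⟨-(supNorm V), ?_⟩
    rintro x ⟨p, hp, rfl⟩
    obtain ⟨hp0, hp1⟩ := hsub s a hp
    calc -(supNorm V) = ∑ s', p s' * (-(supNorm V)) := by
          rw [← Finset.sum_mul, hp1, one_mul]
      _ ≤ ∑ s', p s' * V s' := by
          apply Finset.sum_le_sum
          intro i _
          exact mul_le_mul_of_nonneg_left (neg_le_of_abs_le (abs_le_supNorm V i)) (hp0 i)
  have hneW : {x : ℝ | ∃ p ∈ P s a, x = ∑ s', p s' * W s'}.Nonempty := by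
    obtain ⟨p, hp⟩ := hne s a
    exact ⟨_, p, hp, rfl⟩
  have key : sigma' P V s a - c ≤ sInf {x : ℝ | ∃ p ∈ P s a, x = ∑ s', p s' * W s'} := by
    apply le_csInf hneW
    rintro x ⟨p, hp, rfl⟩
    obtain ⟨hp0, hp1⟩ := hsub s a hp
    have h1 : sigma' P V s a ≤ ∑ s', p s' * V s' := csInf_le hbdd ⟨p, hp, rfl⟩
    have h2 : ∑ s', p s' * V s' ≤ ∑ s', p s' * W s' + c := by
      have heq : ∑ s', p s' * V s' - ∑ s', p s' * W s' = ∑ s', p s' * (V - W) s' := by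
        rw [← Finset.sum_sub_distrib]; congr 1; ext i; simp [Pi.sub_apply]; ring
      have hle : ∑ s', p s' * (V - W) s' ≤ c := by
        calc ∑ s', p s' * (V - W) s' ≤ ∑ s', p s' * c := by
              apply Finset.sum_le_sum
              intro i _
              exact mul_le_mul_of_nonneg_left
                (le_trans (le_abs_self _) (abs_le_supNorm _ i)) (hp0 i)
          _ = c := by rw [← Finset.sum_mul, hp1, one_mul]
      linarith
    linarith
  have : sigma' P W s a = sInf {x : ℝ | ∃ p ∈ P s a, x = ∑ s', p s' * W s'} := rfl
  linarith

lemma bell_pt {S A : Type*} [Fintype S] [Fintype A] [Nonempty S] [Nonempty A]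
    (P : S → A → Set (S → ℝ)) (hne : ∀ s a, (P s a).Nonempty)
    (hsub : ∀ s a, P s a ⊆ stdSimplex ℝ S) (γ : ℝ) (hγ0 : 0 ≤ γ)
    (r : S → A → ℝ) (V W : S → ℝ) (s : S) :
    |(Finset.univ.sup' Finset.univ_nonempty fun a => r s a + γ * sigma' P V s a) -
      (Finset.univ.sup' Finset.univ_nonempty fun a => r s a + γ * sigma' P W s a)| ≤
      γ * supNorm (V - W) := by
  have key : ∀ (V W : S → ℝ),
      (Finset.univ.sup' Finset.univ_nonempty fun a => r s a + γ * sigma' P V s a) ≤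
      (Finset.univ.sup' Finset.univ_nonempty fun a => r s a + γ * sigma' P W s a) +
        γ * supNorm (V - W) := by
    intro V W
    apply Finset.sup'_le
    intro a _
    have h1 := sigma_le_sigma_add P hne hsub V W s a
    have h2 : r s a + γ * sigma' P W s a ≤
        Finset.univ.sup' Finset.univ_nonempty fun a' => r s a' + γ * sigma' P W s a' :=
      Finset.le_sup' (fun a' => r s a' + γ * sigma' P W s a') (Finset.mem_univ a)
    nlinarith
  rw [abs_le]
  constructor
  · have := key W V
    have : supNorm (W - V) = supNorm (V - W) := by
      unfold supNorm; congr 1; ext i; rw [Pi.sub_apply, Pi.sub_apply, abs_sub_comm]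
    have h := key W V
    rw [this] at h
    linarith
  · linarith [key V W]


/-- The robust discounted Bellman equation has a unique solution, and the robust
discounted Bellman operator is a `γ`-contraction in the sup norm. -/
theorem stmt4 {S A : Type*} [Fintype S] [Fintype A] [Nonempty S] [Nonempty A]
    (P : S → A → Set (S → ℝ))
    (hne : ∀ s a, (P s a).Nonempty)
    (hsub : ∀ s a, P s a ⊆ stdSimplex ℝ S)
    (γ : ℝ) (hγ0 : 0 ≤ γ) (hγ1 : γ < 1)
    (r : S → A → ℝ) :
    (∃! V : S → ℝ, ∀ s,
        V s = Finset.univ.sup' Finset.univ_nonempty fun a => r s a + γ * sigma' P V s a) ∧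
    (∀ V W : S → ℝ,
      supNorm
          ((fun s => Finset.univ.sup' Finset.univ_nonempty fun a => r s a + γ * sigma' P V s a) -
            fun s => Finset.univ.sup' Finset.univ_nonempty fun a => r s a + γ * sigma' P W s a) ≤
        γ * supNorm (V - W)) := by
  set T : (S → ℝ) → (S → ℝ) :=
    fun V s => Finset.univ.sup' Finset.univ_nonempty fun a => r s a + γ * sigma' P V s a with hT
  have hcontr : ∀ V W : S → ℝ, supNorm (T V - T W) ≤ γ * supNorm (V - W) := by
    intro V W
    apply Finset.sup'_le
    intro s _
    exact bell_pt P hne hsub γ hγ0 r V W s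
  have hsupdist : ∀ V W : S → ℝ, supNorm (V - W) ≤ dist V W := by
    intro V W
    apply Finset.sup'_le
    intro s _
    rw [Pi.sub_apply, ← Real.dist_eq]
    exact dist_le_pi_dist V W s
  have hdistsup : ∀ V W : S → ℝ, dist V W ≤ supNorm (V - W) := by
    intro V W
    rw [dist_pi_le_iff (supNorm_nonneg _)]
    intro s
    rw [Real.dist_eq]
    exact abs_le_supNorm (V - W) s
  have hlip : ContractingWith ⟨γ, hγ0⟩ T := by
    refine ⟨by exact_mod_cast hγ1, LipschitzWith.of_dist_le_mul fun V W => ?_⟩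
    calc dist (T V) (T W) ≤ supNorm (T V - T W) := hdistsup _ _
      _ ≤ γ * supNorm (V - W) := hcontr V W
      _ ≤ γ * dist V W := mul_le_mul_of_nonneg_left (hsupdist V W) hγ0
      _ = (⟨γ, hγ0⟩ : NNReal) * dist V W := rfl
  constructor
  · refine ⟨hlip.fixedPoint T, ?_, ?_⟩
    · intro s
      exact congrFun (hlip.fixedPoint_isFixedPt.symm) s
    · intro V hV
      exact hlip.fixedPoint_unique (funext fun s => (hV s).symm)
  · exact hcontr
end

section
/- Let Q : S × A → ℝ, define h : S → ℝ by h s = max_a Q(s,a), and let π : S → A be a greedy policy for Q, i.e. Q(s, π s) = h s for all s. Let π' : S → A be an arbitrary policy. Assume: (i) P̂ : Matrix S S ℝ has, for each s, its row P̂ s in 𝒫 s (π s); (ii) P̂∞ : Matrix S S ℝ is row-stochastic with P̂∞ * P̂ = P̂∞, and g s = ∑_{s'} P̂∞ s s' * r s' (π s'); (iii) P' : Matrix S S ℝ has, for each s, its row P' s in 𝒫 s (π' s) and attains the support function at h: ∑_{s'} P' s s' * h s' = σ h (s, π' s); (iv) P'∞ : Matrix S S ℝ is row-stochastic with P'∞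 * P' = P'∞, and g' s = ∑_{s'} P'∞ s s' * r s' (π' s'). Then for all states s and s₀: g' s − g s₀ ≤ Sp(𝒯 Q − Q), where the span is taken over S × A and (𝒯 Q − Q)(s,a) = r s a + σ h (s,a) − Q(s,a). -/
open Finset

def RowStochastic {S : Type*} [Fintype S] (P : Matrix S S ℝ) : Prop :=
  (∀ s s', 0 ≤ P s s') ∧ ∀ s, ∑ s', P s s' = 1

/-- Paper's Lemma 2 (policy-gap bound): the gap between the robust average reward of
any policy (evaluated at a kernel attaining the support function, with stationary
limit `P'∞`) and the greedy policy's robust average reward is bounded by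
`Sp(𝒯 Q − Q)`. -/
theorem stmt6 {S A : Type*} [Fintype S] [Fintype A] [Nonempty S] [Nonempty A]
    (P : S → A → Set (S → ℝ))
    (hne : ∀ s a, (P s a).Nonempty)
    (hsub : ∀ s a, P s a ⊆ stdSimplex ℝ S)
    (r : S → A → ℝ)
    (Q : S × A → ℝ) (h : S → ℝ)
    (hh : ∀ s, h s = Finset.univ.sup' Finset.univ_nonempty fun a => Q (s, a))
    (π : S → A) (hπ : ∀ s, Q (s, π s) = h s)
    (π' : S → A)
    (Phat : Matrix S S ℝ) (hPhat : ∀ s, Phat s ∈ P s (π s))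
    (Phatinf : Matrix S S ℝ) (hPhatinf : RowStochastic Phatinf)
    (hfix : Phatinf * Phat = Phatinf)
    (g : S → ℝ) (hg : ∀ s, g s = ∑ s', Phatinf s s' * r s' (π s'))
    (P' : Matrix S S ℝ) (hP' : ∀ s, P' s ∈ P s (π' s))
    (hP'att : ∀ s, ∑ s', P' s s' * h s' = sigma' P h s (π' s))
    (P'inf : Matrix S S ℝ) (hP'inf : RowStochastic P'inf)
    (hfix' : P'inf * P' = P'inf)
    (g' : S → ℝ) (hg' : ∀ s, g' s = ∑ s', P'inf s s' * r s' (π' s')) :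
    ∀ s s₀ : S,
      g' s - g s₀ ≤ spanSN (fun sa : S × A => r sa.1 sa.2 + sigma' P h sa.1 sa.2 - Q sa) := by
  intro s s₀
  set δ : S × A → ℝ := fun sa => r sa.1 sa.2 + sigma' P h sa.1 sa.2 - Q sa with hδ
  set M := Finset.univ.sup' Finset.univ_nonempty δ with hM
  set m := Finset.univ.inf' Finset.univ_nonempty δ with hm
  -- sum-swap identity for fixed points
  have swap : ∀ (W V : Matrix S S ℝ), W * V = W →
      ∀ t : S, ∑ s', W t s' * (∑ u, V s' u * h u) = ∑ u, W t u * h u := by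
    intro W V hWV t
    calc ∑ s', W t s' * (∑ u, V s' u * h u)
        = ∑ s', ∑ u, W t s' * V s' u * h u := by
          simp [Finset.mul_sum, mul_assoc]
      _ = ∑ u, (∑ s', W t s' * V s' u) * h u := by
          rw [Finset.sum_comm]; simp [Finset.sum_mul]
      _ = ∑ u, W t u * h u := by
          refine Finset.sum_congr rfl fun u _ => ?_
          have : (W * V) t u = W t u := by rw [hWV]
          rw [← this, Matrix.mul_apply]
  -- Upper bound: g' s ≤ M
  have key : ∀ s', r s' (π' s') ≤ M + h s' - ∑ u, P' s' u * h u := by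
    intro s'
    have h1 : δ (s', π' s') ≤ M := Finset.le_sup' δ (Finset.mem_univ _)
    have h2 : Q (s', π' s') ≤ h s' := by
      rw [hh]; exact Finset.le_sup' (fun a => Q (s', a)) (Finset.mem_univ (π' s'))
    have h3 := hP'att s'
    simp only [hδ] at h1
    linarith
  have hub : g' s ≤ M := by
    have step : g' s ≤ ∑ s', P'inf s s' * (M + h s' - ∑ u, P' s' u * h u) := by
      rw [hg']
      exact Finset.sum_le_sum fun s' _ =>
        mul_le_mul_of_nonneg_left (key s') (hP'inf.1 s s')
    have expand : ∑ s', P'inf s s' * (M + h s' - ∑ u, P' s' u * h u) = M := by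
      have e1 : ∑ s', P'inf s s' * (M + h s' - ∑ u, P' s' u * h u)
          = (∑ s', P'inf s s') * M + (∑ s', P'inf s s' * h s')
            - ∑ s', P'inf s s' * (∑ u, P' s' u * h u) := by
        rw [Finset.sum_mul]
        rw [← Finset.sum_add_distrib, ← Finset.sum_sub_distrib]
        refine Finset.sum_congr rfl fun s' _ => ?_; ring
      rw [e1, hP'inf.2 s, swap P'inf P' hfix' s]; ring
    linarith
  -- Lower bound: m ≤ g s₀
  have key2 : ∀ s', m + h s' - ∑ u, Phat s' u * h u ≤ r s' (π s') := by
    intro s'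
    have h1 : m ≤ δ (s', π s') := Finset.inf'_le δ (Finset.mem_univ _)
    have h2 : Q (s', π s') = h s' := hπ s'
    have h3 : sigma' P h s' (π s') ≤ ∑ u, Phat s' u * h u := by
      apply csInf_le
      · refine ⟨Finset.univ.inf' Finset.univ_nonempty h, ?_⟩
        rintro x ⟨p, hp, rfl⟩
        have hp' := hsub s' (π s') hp
        calc Finset.univ.inf' Finset.univ_nonempty h
            = ∑ u, p u * Finset.univ.inf' Finset.univ_nonempty h := by
              rw [← Finset.sum_mul, hp'.2, one_mul]
          _ ≤ ∑ u, p u * h u :=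
              Finset.sum_le_sum fun u _ =>
                mul_le_mul_of_nonneg_left (Finset.inf'_le _ (Finset.mem_univ u)) (hp'.1 u)
      · exact ⟨Phat s', hPhat s', rfl⟩
    simp only [hδ] at h1
    linarith
  have hlb : m ≤ g s₀ := by
    have step : ∑ s', Phatinf s₀ s' * (m + h s' - ∑ u, Phat s' u * h u) ≤ g s₀ := by
      rw [hg]
      exact Finset.sum_le_sum fun s' _ =>
        mul_le_mul_of_nonneg_left (key2 s') (hPhatinf.1 s₀ s')
    have expand : ∑ s', Phatinf s₀ s' * (m + h s' - ∑ u, Phat s' u * h u) = m := by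
      have e1 : ∑ s', Phatinf s₀ s' * (m + h s' - ∑ u, Phat s' u * h u)
          = (∑ s', Phatinf s₀ s') * m + (∑ s', Phatinf s₀ s' * h s')
            - ∑ s', Phatinf s₀ s' * (∑ u, Phat s' u * h u) := by
        rw [Finset.sum_mul]
        rw [← Finset.sum_add_distrib, ← Finset.sum_sub_distrib]
        refine Finset.sum_congr rfl fun s' _ => ?_; ring
      rw [e1, hPhatinf.2 s₀, swap Phatinf Phat hfix s₀]; ring
    linarith
  have : spanSN δ = M - m := rfl
  rw [this]
  linarith
end

section
/- Let S be a nonempty finite type, let P and P∞ be row-stochastic matrices in Matrix S S ℝ with P∞ * P = P∞, let γ ∈ [0,1), r : S → ℝ, and let V : S → ℝ satisfy the discounted evaluation equation V = r + γ • P.mulVec V. Set g = P∞.mulVec r. Then g = (1−γ) • (P∞.mulVec V), and consequently for every state s: |g s − (1−γ) * V s| ≤ Sp((1−γ) • V). -/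
open Finset

lemma mulVec_le_sup {S : Type*} [Fintype S] [Nonempty S]
    (P : Matrix S S ℝ) (hP : RowStochastic P) (w : S → ℝ) (s : S) :
    P.mulVec w s ≤ Finset.univ.sup' Finset.univ_nonempty w := by
  have : P.mulVec w s ≤ ∑ s', P s s' * Finset.univ.sup' Finset.univ_nonempty w := by
    apply Finset.sum_le_sum
    intro i _
    exact mul_le_mul_of_nonneg_left (Finset.le_sup' w (Finset.mem_univ i)) (hP.1 s i)
  simpa [← Finset.sum_mul, hP.2 s] using this

lemma inf_le_mulVec {S : Type*} [Fintype S] [Nonempty S]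
    (P : Matrix S S ℝ) (hP : RowStochastic P) (w : S → ℝ) (s : S) :
    Finset.univ.inf' Finset.univ_nonempty w ≤ P.mulVec w s := by
  have : ∑ s', P s s' * Finset.univ.inf' Finset.univ_nonempty w ≤ P.mulVec w s := by
    apply Finset.sum_le_sum
    intro i _
    exact mul_le_mul_of_nonneg_left (Finset.inf'_le w (Finset.mem_univ i)) (hP.1 s i)
  simpa [← Finset.sum_mul, hP.2 s] using this

/-- Per-kernel core of the paper's Lemma 4: the gain equals the `P∞`-average of the
normalized discounted value, hence their pointwise distance is at most the span of
the normalized discounted value. -/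
theorem stmt7 {S : Type*} [Fintype S] [Nonempty S]
    (P Pinf : Matrix S S ℝ) (hP : RowStochastic P) (hPinf : RowStochastic Pinf)
    (hfix : Pinf * P = Pinf)
    (γ : ℝ) (hγ0 : 0 ≤ γ) (hγ1 : γ < 1)
    (r : S → ℝ) (V : S → ℝ)
    (hV : V = r + γ • P.mulVec V)
    (g : S → ℝ) (hg : g = Pinf.mulVec r) :
    g = (1 - γ) • Pinf.mulVec V ∧
    ∀ s : S, |g s - (1 - γ) * V s| ≤ spanSN ((1 - γ) • V) := by
  have hr : r = V - γ • P.mulVec V := eq_sub_of_add_eq hV.symm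
  have key : g = (1 - γ) • Pinf.mulVec V := by
    rw [hg, hr]
    have h1 : Pinf.mulVec (γ • P.mulVec V) = γ • Pinf.mulVec (P.mulVec V) := by
      rw [Matrix.mulVec_smul]
    have h2 : Pinf.mulVec (P.mulVec V) = Pinf.mulVec V := by
      rw [Matrix.mulVec_mulVec, hfix]
    rw [sub_eq_add_neg, Matrix.mulVec_add, Matrix.mulVec_neg, h1, h2]
    ext s
    simp [sub_smul]
    ring
  refine ⟨key, fun s => ?_⟩
  set w : S → ℝ := (1 - γ) • V with hw
  have hgs : g s = Pinf.mulVec w s := by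
    rw [key]
    simp [hw, Matrix.mulVec, dotProduct, Finset.mul_sum, mul_left_comm]
  have hws : (1 - γ) * V s = w s := by simp [hw]
  rw [hgs, hws]
  have h1 := mulVec_le_sup Pinf hPinf w s
  have h2 := inf_le_mulVec Pinf hPinf w s
  have h3 : w s ≤ Finset.univ.sup' Finset.univ_nonempty w := Finset.le_sup' w (Finset.mem_univ s)
  have h4 : Finset.univ.inf' Finset.univ_nonempty w ≤ w s := Finset.inf'_le w (Finset.mem_univ s)
  rw [spanSN, abs_sub_le_iff]
  constructor <;> linarith
end

section
/- Let r : S → A → ℝ, g ∈ ℝ, and h : S → ℝ satisfy the robust average-reward Bellman equation g + h s = max_a ( r s a + σ h (s,a) ) for every s. Let γ ∈ [0,1) and let V : S → ℝ satisfy the robust discounted Bellman equation V s = max_a ( r s a + γ * σ V (s,a) ) for every s. Define h_γ : S → ℝ by h_γ s = V s − g/(1−γ). Then ‖h − h_γ‖∞ ≤ ‖h‖∞. -/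
open Finset

lemma dot_abs_le {S : Type*} [Fintype S] [Nonempty S] {p : S → ℝ} (v : S → ℝ)
    (hp : p ∈ stdSimplex ℝ S) : |∑ s', p s' * v s'| ≤ supNorm v := by
  obtain ⟨hpos, hsum⟩ := hp
  rw [abs_le]
  constructor
  · calc -supNorm v = ∑ s', p s' * (-supNorm v) := by
          rw [← Finset.sum_mul, hsum, one_mul]
      _ ≤ ∑ s', p s' * v s' := by
          refine Finset.sum_le_sum fun s' _ => mul_le_mul_of_nonneg_left ?_ (hpos s')
          have := abs_le_supNorm v s'
          rw [abs_le] at this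
          linarith [this.1]
  · calc ∑ s', p s' * v s' ≤ ∑ s', p s' * supNorm v := by
          refine Finset.sum_le_sum fun s' _ => mul_le_mul_of_nonneg_left ?_ (hpos s')
          exact le_of_abs_le (abs_le_supNorm v s')
      _ = supNorm v := by rw [← Finset.sum_mul, hsum, one_mul]

/-- Equation (114) of the paper: the robust bias `h` and the shifted robust
discounted value `h_γ = V − g/(1−γ)` satisfy `‖h − h_γ‖∞ ≤ ‖h‖∞`. -/
theorem stmt8 {S A : Type*} [Fintype S] [Fintype A] [Nonempty S] [Nonempty A]
    (P : S → A → Set (S → ℝ))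
    (hne : ∀ s a, (P s a).Nonempty)
    (hsub : ∀ s a, P s a ⊆ stdSimplex ℝ S)
    (r : S → A → ℝ) (g : ℝ) (h : S → ℝ)
    (hBellman : ∀ s, g + h s =
      Finset.univ.sup' Finset.univ_nonempty fun a => r s a + sigma' P h s a)
    (γ : ℝ) (hγ0 : 0 ≤ γ) (hγ1 : γ < 1)
    (V : S → ℝ)
    (hV : ∀ s, V s =
      Finset.univ.sup' Finset.univ_nonempty fun a => r s a + γ * sigma' P V s a)
    (hγfun : S → ℝ) (hdef : ∀ s, hγfun s = V s - g / (1 - γ)) :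
    supNorm (h - hγfun) ≤ supNorm h := by
  have hγne : (1 : ℝ) - γ ≠ 0 := by linarith
  set M : ℝ := γ * supNorm (h - hγfun) + (1 - γ) * supNorm h with hM
  set c : ℝ := γ * g / (1 - γ) with hc
  -- key claim on sigma'
  have key : ∀ s a, |sigma' P h s a + c - γ * sigma' P V s a| ≤ M := by
    intro s a
    set Aset : Set ℝ := {x : ℝ | ∃ p ∈ P s a, x = ∑ s', p s' * h s'} with hAset
    set Bset : Set ℝ := {x : ℝ | ∃ p ∈ P s a, x = ∑ s', p s' * V s'} with hBset
    obtain ⟨p₀, hp₀⟩ := hne s a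
    have hAne : Aset.Nonempty := ⟨_, p₀, hp₀, rfl⟩
    have hBne : Bset.Nonempty := ⟨_, p₀, hp₀, rfl⟩
    have hAbdd : BddBelow Aset := by
      refine ⟨-supNorm h, ?_⟩
      rintro x ⟨p, hp, rfl⟩
      have := dot_abs_le h (hsub s a hp)
      rw [abs_le] at this; exact this.1
    have hBbdd : BddBelow Bset := by
      refine ⟨-supNorm V, ?_⟩
      rintro x ⟨p, hp, rfl⟩
      have := dot_abs_le V (hsub s a hp)
      rw [abs_le] at this; exact this.1
    -- pointwise estimate
    have hpt : ∀ p ∈ P s a,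
        |(∑ s', p s' * h s') + c - γ * ∑ s', p s' * V s'| ≤ M := by
      intro p hp
      have hps := hsub s a hp
      obtain ⟨hpos, hsum⟩ := hps
      have hsum' : ∑ s', p s' * hγfun s' = (∑ s', p s' * V s') - g / (1 - γ) := by
        have : ∀ s' : S, p s' * hγfun s' = p s' * V s' - p s' * (g / (1 - γ)) := by
          intro s'; rw [hdef s']; ring
        rw [Finset.sum_congr rfl fun s' _ => this s', Finset.sum_sub_distrib,
          ← Finset.sum_mul, hsum, one_mul]
      have hd : ∑ s', p s' * (h - hγfun) s' =
          (∑ s', p s' * h s') - ∑ s', p s' * hγfun s' := by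
        simp [Pi.sub_apply, mul_sub, Finset.sum_sub_distrib]
      have h1 : |∑ s', p s' * (h - hγfun) s'| ≤ supNorm (h - hγfun) :=
        dot_abs_le _ (hsub s a hp)
      have h2 : |∑ s', p s' * h s'| ≤ supNorm h := dot_abs_le _ (hsub s a hp)
      have hid : (∑ s', p s' * h s') + c - γ * ∑ s', p s' * V s' =
          γ * (∑ s', p s' * (h - hγfun) s') + (1 - γ) * (∑ s', p s' * h s') := by
        rw [hd, hsum', hc]; field_simp; ring
      rw [hid]
      calc |γ * (∑ s', p s' * (h - hγfun) s') + (1 - γ) * (∑ s', p s' * h s')|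
          ≤ γ * |∑ s', p s' * (h - hγfun) s'| + (1 - γ) * |∑ s', p s' * h s'| := by
            refine (abs_add_le _ _).trans ?_
            rw [abs_mul, abs_mul, abs_of_nonneg hγ0, abs_of_nonneg (by linarith : (0:ℝ) ≤ 1 - γ)]
        _ ≤ M := by
            rw [hM]
            have := mul_le_mul_of_nonneg_left h1 hγ0
            have := mul_le_mul_of_nonneg_left h2 (by linarith : (0:ℝ) ≤ 1 - γ)
            linarith
    rw [abs_le]
    constructor
    · -- γ * sInf Bset - c - M ≤ sInf Aset
      have h4 : γ * sInf Bset - c - M ≤ sInf Aset := by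
        refine le_csInf hAne ?_
        rintro x ⟨p, hp, rfl⟩
        have h1 := hpt p hp
        rw [abs_le] at h1
        have h2 : sInf Bset ≤ ∑ s', p s' * V s' := csInf_le hBbdd ⟨p, hp, rfl⟩
        have h3 := mul_le_mul_of_nonneg_left h2 hγ0
        linarith [h1.1]
      show -M ≤ sigma' P h s a + c - γ * sigma' P V s a
      have hA : sigma' P h s a = sInf Aset := rfl
      have hB : sigma' P V s a = sInf Bset := rfl
      rw [hA, hB]; linarith
    · -- sInf Aset + c - γ * sInf Bset ≤ M
      have hmain : sigma' P h s a ≤ γ * sInf Bset - c + M := by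
        refine le_of_forall_pos_le_add ?_
        intro ε hε
        obtain ⟨x, hxB, hxlt⟩ := Real.lt_sInf_add_pos hBne hε
        obtain ⟨p, hp, rfl⟩ := hxB
        have h1 := hpt p hp
        rw [abs_le] at h1
        have h2 : sigma' P h s a ≤ ∑ s', p s' * h s' := csInf_le hAbdd ⟨p, hp, rfl⟩
        have h3 : γ * (∑ s', p s' * V s') ≤ γ * (sInf Bset + ε) :=
          mul_le_mul_of_nonneg_left (le_of_lt hxlt) hγ0
        nlinarith [h1.2, mul_le_of_le_one_left (le_of_lt hε) (le_of_lt hγ1)]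
      have hB : sigma' P V s a = sInf Bset := rfl
      rw [hB]; linarith
  -- per-state estimate
  have state : ∀ s, |h s - hγfun s| ≤ M := by
    intro s
    have hF : h s = (Finset.univ.sup' Finset.univ_nonempty
        fun a => r s a + sigma' P h s a) - g := by linarith [hBellman s]
    have hG : hγfun s = (Finset.univ.sup' Finset.univ_nonempty
        fun a => r s a + γ * sigma' P V s a) - g / (1 - γ) := by
      rw [hdef s, hV s]
    have hcg : g / (1 - γ) - g = c := by rw [hc]; field_simp; ring
    set F := Finset.univ.sup' Finset.univ_nonempty fun a => r s a + sigma' P h s a with hFd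
    set G := Finset.univ.sup' Finset.univ_nonempty fun a => r s a + γ * sigma' P V s a with hGd
    have hFG1 : F ≤ G + M - c := by
      rw [hFd]
      refine Finset.sup'_le _ _ fun a _ => ?_
      have h1 := key s a
      rw [abs_le] at h1
      have h2 : r s a + γ * sigma' P V s a ≤ G := by
        rw [hGd]; exact Finset.le_sup' (fun a => r s a + γ * sigma' P V s a) (Finset.mem_univ a)
      linarith [h1.2]
    have hFG2 : G ≤ F + M + c := by
      rw [hGd]
      refine Finset.sup'_le _ _ fun a _ => ?_
      have h1 := key s a
      rw [abs_le] at h1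
      have h2 : r s a + sigma' P h s a ≤ F := by
        rw [hFd]; exact Finset.le_sup' (fun a => r s a + sigma' P h s a) (Finset.mem_univ a)
      linarith [h1.1]
    rw [abs_le]
    constructor
    · rw [hF, hG]; linarith
    · rw [hF, hG]; linarith
  have hN : supNorm (h - hγfun) ≤ M := by
    refine Finset.sup'_le _ _ fun s _ => ?_
    simpa [Pi.sub_apply] using state s
  rw [hM] at hN
  nlinarith [hN, sub_pos.mpr hγ1]
end

section
/- Let r : S → A → ℝ, g ∈ ℝ, and h : S → ℝ satisfy the robust average-reward Bellman equation g + h s = max_a ( r s a + σ h (s,a) ) for every s. Let γ ∈ [0,1) and let V : S → ℝ satisfy the robust discounted Bellman equation V s = max_a ( r s a + γ * σ V (s,a) ) for every s. Then Sp(V) ≤ 4 * ‖h‖∞, and therefore Sp((1−γ) • V) ≤ 4 * (1−γ) * ‖h‖∞. -/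
open Finset

/-
Put `g' = g / (1 - γ)`. Since `g + γ g' = g'`, the function `W = h + g'` satisfies the discounted
equation up to replacing `σ h` by `γ σ h`, so the discounted Bellman operator moves `W` by at most
`(1 - γ) ‖σ h‖∞ ≤ (1 - γ) ‖h‖∞`. The operator is a `γ`-contraction in the sup norm, hence its
fixed point `V` lies within `‖h‖∞` of `W`, and `Sp(V) ≤ Sp(h) + 2 ‖h‖∞ ≤ 4 ‖h‖∞`.
-/

lemma supNorm_eq_norm {X : Type*} [Fintype X] [Nonempty X] (v : X → ℝ) : supNorm v = ‖v‖ := by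
  refine le_antisymm (sup'_le _ _ fun x _ => norm_le_pi_norm v x) ?_
  have hle : ∀ x, |v x| ≤ supNorm v := fun x => le_sup' (fun x => |v x|) (mem_univ x)
  exact (pi_norm_le_iff_of_nonneg ((abs_nonneg _).trans (hle (Classical.arbitrary X)))).2 hle

lemma spanSN_le_iff {X : Type*} [Fintype X] [Nonempty X] {v : X → ℝ} {c : ℝ} :
    spanSN v ≤ c ↔ ∀ x y, v x - v y ≤ c := by
  obtain ⟨x, -, hx⟩ := exists_mem_eq_sup' univ_nonempty v
  obtain ⟨y, -, hy⟩ := exists_mem_eq_inf' univ_nonempty v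
  refine ⟨fun hc x' y' => ?_, fun hc => by rw [spanSN, hx, hy]; exact hc x y⟩
  have := le_sup' v (mem_univ x')
  have := inf'_le v (mem_univ y')
  rw [spanSN] at hc
  linarith

lemma sub_le_sub_add_two_mul_norm_sub {X : Type*} [Fintype X] (v w : X → ℝ) (x y : X) :
    v x - v y ≤ w x - w y + 2 * ‖v - w‖ := by
  have hx := norm_le_pi_norm (v - w) x
  have hy := norm_le_pi_norm (v - w) y
  rw [Real.norm_eq_abs, Pi.sub_apply] at hx hy
  linarith [abs_le.1 hx, abs_le.1 hy]

lemma Finset.abs_sup'_sub_sup'_le {ι : Type*} {s : Finset ι} (hs : s.Nonempty) {f g : ι → ℝ}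
    {c : ℝ} (hfg : ∀ i ∈ s, |f i - g i| ≤ c) : |s.sup' hs f - s.sup' hs g| ≤ c := by
  have key : ∀ f g : ι → ℝ, (∀ i ∈ s, |f i - g i| ≤ c) → s.sup' hs f ≤ s.sup' hs g + c :=
    fun f g hfg => sup'_le _ _ fun i hi => by
      linarith [le_sup' g hi, (abs_le.1 (hfg i hi)).2]
  refine abs_sub_le_iff.2 ⟨by linarith [key f g hfg], ?_⟩
  linarith [key g f fun i hi => abs_sub_comm (f i) (g i) ▸ hfg i hi]

section Simplex

variable {S : Type*} [Fintype S] {p : S → ℝ}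

lemma abs_sum_mul_le_norm (hp : p ∈ stdSimplex ℝ S) (v : S → ℝ) :
    |∑ s, p s * v s| ≤ ‖v‖ :=
  calc |∑ s, p s * v s| ≤ ∑ s, p s * ‖v‖ := by
        refine (abs_sum_le_sum_abs _ _).trans (sum_le_sum fun s _ => ?_)
        rw [abs_mul, abs_of_nonneg (hp.1 s)]
        exact mul_le_mul_of_nonneg_left (norm_le_pi_norm v s) (hp.1 s)
    _ = ‖v‖ := by rw [← sum_mul, hp.2, one_mul]

lemma sum_mul_add_const (hp : p ∈ stdSimplex ℝ S) (v : S → ℝ) (c : ℝ) :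
    ∑ s, p s * (v s + c) = ∑ s, p s * v s + c := by
  simp only [mul_add, sum_add_distrib, ← sum_mul, hp.2, one_mul]

end Simplex

namespace sigma'

variable {S A : Type*} [Fintype S] {P : S → A → Set (S → ℝ)} {s : S} {a : A}

lemma le_sum (hsub : P s a ⊆ stdSimplex ℝ S) (v : S → ℝ) {p : S → ℝ} (hp : p ∈ P s a) :
    sigma' P v s a ≤ ∑ s', p s' * v s' := by
  refine csInf_le ⟨-‖v‖, ?_⟩ ⟨p, hp, rfl⟩
  rintro _ ⟨q, hq, rfl⟩
  exact neg_le_of_abs_le (abs_sum_mul_le_norm (hsub hq) v)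

lemma le_add_of_forall_sum_le (hne : (P s a).Nonempty) (hsub : P s a ⊆ stdSimplex ℝ S)
    {v w : S → ℝ} {c : ℝ} (hvw : ∀ p ∈ P s a, ∑ s', p s' * v s' ≤ ∑ s', p s' * w s' + c) :
    sigma' P v s a ≤ sigma' P w s a + c := by
  rw [← sub_le_iff_le_add]
  refine le_csInf ⟨_, hne.some, hne.some_mem, rfl⟩ ?_
  rintro _ ⟨p, hp, rfl⟩
  linarith [le_sum hsub v hp, hvw p hp]

lemma add_const (hne : (P s a).Nonempty) (hsub : P s a ⊆ stdSimplex ℝ S) (v : S → ℝ) (c : ℝ) :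
    sigma' P (fun s' => v s' + c) s a = sigma' P v s a + c := by
  refine le_antisymm
    (le_add_of_forall_sum_le hne hsub fun p hp => (sum_mul_add_const (hsub hp) v c).le) ?_
  have := le_add_of_forall_sum_le (v := v) (w := fun s' => v s' + c) (c := -c) hne hsub
    fun p hp => by rw [sum_mul_add_const (hsub hp) v c]; linarith
  linarith

lemma abs_sub_le_norm_sub (hne : (P s a).Nonempty) (hsub : P s a ⊆ stdSimplex ℝ S)
    (v w : S → ℝ) : |sigma' P v s a - sigma' P w s a| ≤ ‖v - w‖ := by
  have key : ∀ v w : S → ℝ, sigma' P v s a ≤ sigma' P w s a + ‖v - w‖ := fun v w =>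
    le_add_of_forall_sum_le hne hsub fun p hp => by
      have hsplit : ∑ s', p s' * v s' = ∑ s', p s' * w s' + ∑ s', p s' * (v - w) s' := by
        rw [← sum_add_distrib]; simp only [Pi.sub_apply]; ring_nf
      linarith [le_of_abs_le (abs_sum_mul_le_norm (hsub hp) (v - w))]
  refine abs_sub_le_iff.2 ⟨by linarith [key v w], ?_⟩
  linarith [key w v, norm_sub_rev v w]

lemma abs_le_norm (hne : (P s a).Nonempty) (hsub : P s a ⊆ stdSimplex ℝ S) (v : S → ℝ) :
    |sigma' P v s a| ≤ ‖v‖ := by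
  obtain ⟨p, hp⟩ := hne
  have hlow : -‖v‖ ≤ sigma' P v s a := le_csInf ⟨_, p, hp, rfl⟩ <| by
    rintro _ ⟨q, hq, rfl⟩
    exact neg_le_of_abs_le (abs_sum_mul_le_norm (hsub hq) v)
  have hup := (le_sum hsub v hp).trans (le_of_abs_le (abs_sum_mul_le_norm (hsub hp) v))
  exact abs_le.2 ⟨hlow, hup⟩

end sigma'

section RobustBellman

variable {S A : Type*} [Fintype S] [Fintype A] [Nonempty A]
  {P : S → A → Set (S → ℝ)} {r : S → A → ℝ} {γ : ℝ}

noncomputable def robustBellman (P : S → A → Set (S → ℝ)) (r : S → A → ℝ) (γ : ℝ)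
    (v : S → ℝ) : S → ℝ :=
  fun s => univ.sup' univ_nonempty fun a => r s a + γ * sigma' P v s a

lemma contractingWith_robustBellman (hne : ∀ s a, (P s a).Nonempty)
    (hsub : ∀ s a, P s a ⊆ stdSimplex ℝ S) (hγ0 : 0 ≤ γ) (hγ1 : γ < 1) :
    ContractingWith (⟨γ, hγ0⟩ : NNReal) (robustBellman P r γ) := by
  refine ⟨hγ1, LipschitzWith.of_dist_le_mul fun v w => ?_⟩
  rw [dist_eq_norm, dist_eq_norm]
  refine (pi_norm_le_iff_of_nonneg (by positivity)).2 fun s => ?_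
  refine abs_sup'_sub_sup'_le _ fun a _ => ?_
  rw [add_sub_add_left_eq_sub, ← mul_sub, abs_mul, abs_of_nonneg hγ0]
  exact mul_le_mul_of_nonneg_left (sigma'.abs_sub_le_norm_sub (hne s a) (hsub s a) v w) hγ0

lemma norm_sub_le_of_isFixedPt_robustBellman (hne : ∀ s a, (P s a).Nonempty)
    (hsub : ∀ s a, P s a ⊆ stdSimplex ℝ S) (hγ0 : 0 ≤ γ) (hγ1 : γ < 1) {V : S → ℝ}
    (hV : Function.IsFixedPt (robustBellman P r γ) V) (W : S → ℝ) :
    ‖V - W‖ ≤ ‖robustBellman P r γ W - W‖ / (1 - γ) := by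
  have := (contractingWith_robustBellman hne hsub hγ0 hγ1).dist_le_of_fixedPoint W hV
  rwa [dist_comm, dist_eq_norm, dist_eq_norm, norm_sub_rev W] at this

lemma norm_robustBellman_sub_le (hne : ∀ s a, (P s a).Nonempty)
    (hsub : ∀ s a, P s a ⊆ stdSimplex ℝ S) (hγ1 : γ ≠ 1) {g : ℝ} {h : S → ℝ}
    (hBellman : ∀ s, g + h s = univ.sup' univ_nonempty fun a => r s a + sigma' P h s a) :
    ‖robustBellman P r γ (fun s => h s + g / (1 - γ)) - fun s => h s + g / (1 - γ)‖
      ≤ |1 - γ| * ‖h‖ := by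
  set g' := g / (1 - γ)
  have hg' : g + γ * g' = g' := by
    simp only [g']; field_simp [sub_ne_zero.2 hγ1.symm]; ring
  refine (pi_norm_le_iff_of_nonneg (by positivity)).2 fun s => ?_
  have hW : h s + g' = univ.sup' univ_nonempty fun a => r s a + sigma' P h s a + γ * g' := by
    rw [← sup'_add, ← hBellman]; linarith
  simp only [Pi.sub_apply, robustBellman, Real.norm_eq_abs, hW]
  refine abs_sup'_sub_sup'_le _ fun a _ => ?_
  rw [sigma'.add_const (hne s a) (hsub s a)]
  calc |r s a + γ * (sigma' P h s a + g') - (r s a + sigma' P h s a + γ * g')|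
      = |1 - γ| * |sigma' P h s a| := by rw [abs_sub_comm, ← abs_mul]; congr 1; ring
    _ ≤ |1 - γ| * ‖h‖ := by gcongr; exact sigma'.abs_le_norm (hne s a) (hsub s a) h

end RobustBellman

/-- Core of the paper's Lemma 5: the span of the robust discounted value function is
bounded by `4‖h‖∞`, where `h` is the robust bias. -/
theorem stmt9 {S A : Type*} [Fintype S] [Fintype A] [Nonempty S] [Nonempty A]
    (P : S → A → Set (S → ℝ))
    (hne : ∀ s a, (P s a).Nonempty)
    (hsub : ∀ s a, P s a ⊆ stdSimplex ℝ S)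
    (r : S → A → ℝ) (g : ℝ) (h : S → ℝ)
    (hBellman : ∀ s, g + h s =
      Finset.univ.sup' Finset.univ_nonempty fun a => r s a + sigma' P h s a)
    (γ : ℝ) (hγ0 : 0 ≤ γ) (hγ1 : γ < 1)
    (V : S → ℝ)
    (hV : ∀ s, V s =
      Finset.univ.sup' Finset.univ_nonempty fun a => r s a + γ * sigma' P V s a) :
    spanSN V ≤ 4 * supNorm h ∧ spanSN ((1 - γ) • V) ≤ 4 * (1 - γ) * supNorm h := by
  set W : S → ℝ := fun s => h s + g / (1 - γ)
  have hpos : 0 < 1 - γ := sub_pos.2 hγ1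
  have hVW : ‖V - W‖ ≤ ‖h‖ :=
    calc ‖V - W‖ ≤ ‖robustBellman P r γ W - W‖ / (1 - γ) :=
          norm_sub_le_of_isFixedPt_robustBellman hne hsub hγ0 hγ1 (funext fun s => (hV s).symm) W
      _ ≤ |1 - γ| * ‖h‖ / (1 - γ) := by
          gcongr; exact norm_robustBellman_sub_le hne hsub hγ1.ne hBellman
      _ = ‖h‖ := by rw [abs_of_pos hpos, mul_div_cancel_left₀ _ hpos.ne']
  have hdiff : ∀ s t, V s - V t ≤ 4 * ‖h‖ := fun s t => by
    have hs := Real.norm_eq_abs (h s) ▸ norm_le_pi_norm h s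
    have ht := Real.norm_eq_abs (h t) ▸ norm_le_pi_norm h t
    have hWst : W s - W t = h s - h t := by simp only [W]; ring
    linarith [sub_le_sub_add_two_mul_norm_sub V W s t, abs_le.1 hs, abs_le.1 ht]
  rw [supNorm_eq_norm]
  refine ⟨spanSN_le_iff.2 hdiff, spanSN_le_iff.2 fun s t => ?_⟩
  simp only [Pi.smul_apply, smul_eq_mul, ← mul_sub, mul_assoc, mul_left_comm _ (1 - γ)]
  exact mul_le_mul_of_nonneg_left (hdiff s t) hpos.le
end

section
/- Let S be a nonempty finite type, P a row-stochastic matrix in Matrix S S ℝ, r : S → ℝ, and suppose g ∈ ℝ and h : S → ℝ satisfy the Poisson equation g + h s = r s + (P.mulVec h) s for every s. For T ∈ ℕ define the T-step value V_T = ∑_{t=0}^{T−1} (P^t).mulVec r. Then V_T = T*g • 1 + h − (P^T).mulVec h, and consequently Sp(V_T) ≤ 2 * Sp(h) for every T. -/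
open Finset

lemma rowStochastic_pow {S : Type*} [Fintype S] [DecidableEq S] {P : Matrix S S ℝ}
    (hP : RowStochastic P) (T : ℕ) : RowStochastic (P ^ T) := by
  induction T with
  | zero =>
    constructor
    · intro s s'
      simp [pow_zero, Matrix.one_apply]
      split <;> norm_num
    · intro s
      simp [pow_zero, Matrix.one_apply]
  | succ n ih =>
    constructor
    · intro s s'
      rw [pow_succ, Matrix.mul_apply]
      exact Finset.sum_nonneg fun j _ => mul_nonneg (ih.1 s j) (hP.1 j s')
    · intro s
      rw [pow_succ]
      simp only [Matrix.mul_apply]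
      rw [Finset.sum_comm]
      have : ∀ j, ∑ s', (P ^ n) s j * P j s' = (P ^ n) s j := by
        intro j
        rw [← Finset.mul_sum, hP.2 j, mul_one]
      simp only [this]
      exact ih.2 s

lemma spanSN_mulVec_le {S : Type*} [Fintype S] [Nonempty S] {Q : Matrix S S ℝ}
    (hQ : RowStochastic Q) (h : S → ℝ) : spanSN (Q.mulVec h) ≤ spanSN h := by
  unfold spanSN
  have hub : ∀ s, Q.mulVec h s ≤ Finset.univ.sup' Finset.univ_nonempty h := by
    intro s
    calc Q.mulVec h s = ∑ s', Q s s' * h s' := rfl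
    _ ≤ ∑ s', Q s s' * Finset.univ.sup' Finset.univ_nonempty h := by
        apply Finset.sum_le_sum
        intro j _
        exact mul_le_mul_of_nonneg_left (Finset.le_sup' h (Finset.mem_univ j)) (hQ.1 s j)
    _ = Finset.univ.sup' Finset.univ_nonempty h := by rw [← Finset.sum_mul, hQ.2, one_mul]
  have hlb : ∀ s, Finset.univ.inf' Finset.univ_nonempty h ≤ Q.mulVec h s := by
    intro s
    calc Finset.univ.inf' Finset.univ_nonempty h
        = ∑ s', Q s s' * Finset.univ.inf' Finset.univ_nonempty h := by
          rw [← Finset.sum_mul, hQ.2, one_mul]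
    _ ≤ ∑ s', Q s s' * h s' := by
        apply Finset.sum_le_sum
        intro j _
        exact mul_le_mul_of_nonneg_left (Finset.inf'_le h (Finset.mem_univ j)) (hQ.1 s j)
    _ = Q.mulVec h s := rfl
  have h1 : Finset.univ.sup' Finset.univ_nonempty (Q.mulVec h) ≤
      Finset.univ.sup' Finset.univ_nonempty h := Finset.sup'_le _ _ fun s _ => hub s
  have h2 : Finset.univ.inf' Finset.univ_nonempty h ≤
      Finset.univ.inf' Finset.univ_nonempty (Q.mulVec h) :=
    Finset.le_inf' _ _ fun s _ => hlb s
  linarith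

lemma spanSN_const_add {S : Type*} [Fintype S] [Nonempty S] (c : ℝ) (v : S → ℝ) :
    spanSN (fun s => c + v s) = spanSN v := by
  unfold spanSN
  have h1 : Finset.univ.sup' Finset.univ_nonempty (fun s => c + v s) =
      c + Finset.univ.sup' Finset.univ_nonempty v := by
    apply le_antisymm
    · exact Finset.sup'_le _ _ fun s _ => by
        have := Finset.le_sup' v (Finset.mem_univ s); linarith
    · obtain ⟨s, _, hs⟩ := Finset.exists_mem_eq_sup' (Finset.univ_nonempty (α := S)) v
      rw [hs]
      exact Finset.le_sup' (fun s => c + v s) (Finset.mem_univ s)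
  have h2 : Finset.univ.inf' Finset.univ_nonempty (fun s => c + v s) =
      c + Finset.univ.inf' Finset.univ_nonempty v := by
    apply le_antisymm
    · obtain ⟨s, _, hs⟩ := Finset.exists_mem_eq_inf' (Finset.univ_nonempty (α := S)) v
      rw [hs]
      exact Finset.inf'_le (fun s => c + v s) (Finset.mem_univ s)
    · exact Finset.le_inf' _ _ fun s _ => by
        have := Finset.inf'_le v (Finset.mem_univ s); linarith
  rw [h1, h2]; ring

lemma spanSN_sub_le {S : Type*} [Fintype S] [Nonempty S] (v w : S → ℝ) :
    spanSN (v - w) ≤ spanSN v + spanSN w := by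
  unfold spanSN
  have h1 : Finset.univ.sup' Finset.univ_nonempty (v - w) ≤
      Finset.univ.sup' Finset.univ_nonempty v - Finset.univ.inf' Finset.univ_nonempty w := by
    apply Finset.sup'_le
    intro s _
    have := Finset.le_sup' v (Finset.mem_univ s)
    have := Finset.inf'_le w (Finset.mem_univ s)
    simp only [Pi.sub_apply]; linarith
  have h2 : Finset.univ.inf' Finset.univ_nonempty v - Finset.univ.sup' Finset.univ_nonempty w ≤
      Finset.univ.inf' Finset.univ_nonempty (v - w) := by
    apply Finset.le_inf'
    intro s _
    have := Finset.inf'_le v (Finset.mem_univ s)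
    have := Finset.le_sup' w (Finset.mem_univ s)
    simp only [Pi.sub_apply]; linarith
  linarith

/-- Equations (119)–(20) of the paper: the `T`-step value of a Markov reward process
with gain `g` and bias `h` equals `T·g·1 + h − P^T h`, so its span is at most
`2 Sp(h)`. -/
theorem stmt10 {S : Type*} [Fintype S] [Nonempty S] [DecidableEq S]
    (P : Matrix S S ℝ) (hP : RowStochastic P)
    (r : S → ℝ) (g : ℝ) (h : S → ℝ)
    (hPoisson : ∀ s, g + h s = r s + P.mulVec h s)
    (V : ℕ → S → ℝ)
    (hV : ∀ T : ℕ, V T = ∑ t ∈ Finset.range T, (P ^ t).mulVec r) :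
    ∀ T : ℕ,
      V T = ((T : ℝ) * g) • (1 : S → ℝ) + h - (P ^ T).mulVec h ∧
      spanSN (V T) ≤ 2 * spanSN h := by
  have hid : ∀ T : ℕ, V T = ((T : ℝ) * g) • (1 : S → ℝ) + h - (P ^ T).mulVec h := by
    intro T
    induction T with
    | zero =>
      rw [hV]
      funext s
      simp [Matrix.mulVec, Matrix.one_apply, dotProduct]
    | succ n ih =>
      have step : V (n + 1) = V n + (P ^ n).mulVec r := by
        rw [hV, hV, Finset.sum_range_succ]
      have hr : r = fun s => g + h s - P.mulVec h s := by
        funext s; have := hPoisson s; linarith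
      rw [step, ih, hr]
      have hrw : (P ^ n).mulVec (fun s => g + h s - P.mulVec h s) =
          (fun _ => g) + (P ^ n).mulVec h - (P ^ (n+1)).mulVec h := by
        funext s
        have hsum : (P ^ n).mulVec (fun s => g + h s - P.mulVec h s) s =
            ∑ j, (P ^ n) s j * g + (∑ j, (P ^ n) s j * h j
              - ∑ j, (P ^ n) s j * P.mulVec h j) := by
          simp only [Matrix.mulVec, dotProduct, mul_add, mul_sub,
            Finset.sum_add_distrib, Finset.sum_sub_distrib]
          ring
        rw [hsum]
        have h1 : ∑ j, (P ^ n) s j * g = g := by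
          rw [← Finset.sum_mul, (rowStochastic_pow hP n).2, one_mul]
        have h2 : ∑ j, (P ^ n) s j * P.mulVec h j = (P ^ (n+1)).mulVec h s := by
          rw [pow_succ, ← Matrix.mulVec_mulVec]
          rfl
        rw [h1, h2]
        have h3 : ∑ j, (P ^ n) s j * h j = (P ^ n).mulVec h s := rfl
        rw [h3]
        simp only [Pi.add_apply, Pi.sub_apply]
        ring
      rw [hrw]
      funext s
      push_cast
      simp [Matrix.mulVec]
      ring
  intro T
  refine ⟨hid T, ?_⟩
  rw [hid T]
  have e1 : ((T : ℝ) * g) • (1 : S → ℝ) + h - (P ^ T).mulVec h =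
      (fun s => (T : ℝ) * g + (h - (P ^ T).mulVec h) s) := by
    funext s; simp; ring
  rw [e1, spanSN_const_add]
  calc spanSN (h - (P ^ T).mulVec h) ≤ spanSN h + spanSN ((P ^ T).mulVec h) :=
        spanSN_sub_le _ _
  _ ≤ spanSN h + spanSN h := by
      have := spanSN_mulVec_le (rowStochastic_pow hP T) h
      linarith
  _ = 2 * spanSN h := by ring
end

section
/- Let S be a nonempty finite type, let P and P∞ be row-stochastic matrices in Matrix S S ℝ with P∞ * P = P∞, let r : S → ℝ, γ ∈ [0,1), and suppose g ∈ ℝ and h : S → ℝ satisfy the Poisson equation g + h s = r s + (P.mulVec h) s for every s, while V : S → ℝ satisfies the discounted evaluation equation V = r + γ • P.mulVec V. Then for every state s: |g − (1−γ) * V s| ≤ 4 * (1−γ) * Sp(h), equivalently ‖(g/(1−γ)) • 1 − V‖∞ ≤ 4 * Sp(h). -/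
open Finset

lemma supNorm_le {X : Type*} [Fintype X] [Nonempty X] (v : X → ℝ) (c : ℝ)
    (hc : ∀ x, |v x| ≤ c) : supNorm v ≤ c :=
  Finset.sup'_le _ _ fun x _ => hc x

lemma mulVec_abs_le {S : Type*} [Fintype S] [Nonempty S] (P : Matrix S S ℝ)
    (hP : RowStochastic P) (v : S → ℝ) (s : S) : |P.mulVec v s| ≤ supNorm v := by
  have h1 : |P.mulVec v s| ≤ ∑ s', P s s' * supNorm v := by
    simp only [Matrix.mulVec, dotProduct]
    calc |∑ s', P s s' * v s'| ≤ ∑ s', |P s s' * v s'| :=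
          Finset.abs_sum_le_sum_abs _ _
      _ ≤ ∑ s', P s s' * supNorm v := by
          refine Finset.sum_le_sum fun s' _ => ?_
          rw [abs_mul, abs_of_nonneg (hP.1 s s')]
          exact mul_le_mul_of_nonneg_left (abs_le_supNorm v s') (hP.1 s s')
  calc |P.mulVec v s| ≤ ∑ s', P s s' * supNorm v := h1
    _ = supNorm v := by rw [← Finset.sum_mul, hP.2 s, one_mul]

lemma mulVec_sub_const {S : Type*} [Fintype S] (P : Matrix S S ℝ)
    (hP : RowStochastic P) (v w : S → ℝ) (d : ℝ) (s : S) :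
    P.mulVec (fun x => v x - w x - d) s = P.mulVec v s - P.mulVec w s - d := by
  simp only [Matrix.mulVec, dotProduct, mul_sub, Finset.sum_sub_distrib]
  rw [← Finset.sum_mul, hP.2 s, one_mul]

/-- Per-kernel form of the paper's Corollary 4: the normalized gain and the
discounted value function differ by at most four times the bias span. -/
theorem stmt12 {S : Type*} [Fintype S] [Nonempty S]
    (P Pinf : Matrix S S ℝ) (hP : RowStochastic P) (hPinf : RowStochastic Pinf)
    (hfix : Pinf * P = Pinf)
    (r : S → ℝ) (γ : ℝ) (hγ0 : 0 ≤ γ) (hγ1 : γ < 1)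
    (g : ℝ) (h : S → ℝ)
    (hPoisson : ∀ s, g + h s = r s + P.mulVec h s)
    (V : S → ℝ) (hV : V = r + γ • P.mulVec V) :
    (∀ s : S, |g - (1 - γ) * V s| ≤ 4 * (1 - γ) * spanSN h) ∧
    supNorm ((g / (1 - γ)) • (1 : S → ℝ) - V) ≤ 4 * spanSN h := by
  have hγ : (0:ℝ) < 1 - γ := by linarith
  have hγne : (1:ℝ) - γ ≠ 0 := ne_of_gt hγ
  set hmax := Finset.univ.sup' Finset.univ_nonempty h with hmaxdef
  set hmin := Finset.univ.inf' Finset.univ_nonempty h with hmindef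
  set c := (hmax + hmin) / 2 with hcdef
  set d := g / (1 - γ) - c with hddef
  set ht : S → ℝ := fun x => h x - c with htdef
  set W : S → ℝ := fun x => V x - h x - d with hWdef
  have hVs : ∀ s, V s = r s + γ * P.mulVec V s := by
    intro s
    have := congrFun hV s
    simpa [Pi.add_apply, Pi.smul_apply, smul_eq_mul] using this
  -- span nonneg
  have hspan : 0 ≤ spanSN h := by
    obtain ⟨x⟩ := ‹Nonempty S›
    have h1 : hmin ≤ h x := Finset.inf'_le _ (Finset.mem_univ x)
    have h2 : h x ≤ hmax := Finset.le_sup' _ (Finset.mem_univ x)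
    simp only [spanSN]; linarith
  -- supNorm of centered h
  have hht : supNorm ht ≤ spanSN h / 2 := by
    apply supNorm_le
    intro x
    have h1 : hmin ≤ h x := Finset.inf'_le _ (Finset.mem_univ x)
    have h2 : h x ≤ hmax := Finset.le_sup' _ (Finset.mem_univ x)
    rw [abs_le]
    constructor <;> simp only [htdef, spanSN, hcdef] <;> [skip; skip] <;> push_cast <;> nlinarith
  -- key pointwise identity
  have hkey : ∀ s, W s = γ * P.mulVec W s - (1 - γ) * (P.mulVec h s - c) := by
    intro s
    have hPW : P.mulVec W s = P.mulVec V s - P.mulVec h s - d :=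
      mulVec_sub_const P hP V h d s
    have h1 := hPoisson s
    have h2 := hVs s
    have h3 : (1 - γ) * (d + c) = g := by
      simp only [hddef]; field_simp; ring
    simp only [hWdef, hPW]
    nlinarith [h1, h2, h3]
  -- sup norm bound on W
  have hWb : supNorm W ≤ spanSN h / 2 := by
    have hstep : supNorm W ≤ γ * supNorm W + (1 - γ) * supNorm ht := by
      apply supNorm_le
      intro s
      rw [hkey s]
      have e1 : |γ * P.mulVec W s| ≤ γ * supNorm W := by
        rw [abs_mul, abs_of_nonneg hγ0]
        exact mul_le_mul_of_nonneg_left (mulVec_abs_le P hP W s) hγ0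
      have e2 : |P.mulVec h s - c| ≤ supNorm ht := by
        have : P.mulVec h s - c = P.mulVec ht s := by
          simp only [htdef, Matrix.mulVec, dotProduct, mul_sub, Finset.sum_sub_distrib,
            ← Finset.sum_mul, hP.2 s, one_mul]
        rw [this]
        exact mulVec_abs_le P hP ht s
      calc |γ * P.mulVec W s - (1 - γ) * (P.mulVec h s - c)|
          ≤ |γ * P.mulVec W s| + |(1 - γ) * (P.mulVec h s - c)| := abs_sub _ _
        _ ≤ γ * supNorm W + (1 - γ) * supNorm ht := by
            refine add_le_add e1 ?_
            rw [abs_mul, abs_of_nonneg (le_of_lt hγ)]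
            exact mul_le_mul_of_nonneg_left e2 (le_of_lt hγ)
    nlinarith [hht]
  -- pointwise decomposition: V s - g/(1-γ) = W s + ht s
  have hdec : ∀ s, V s - g / (1 - γ) = W s + ht s := by
    intro s
    simp only [hWdef, htdef, hddef]
    ring
  have hpt : ∀ s, |V s - g / (1 - γ)| ≤ spanSN h := by
    intro s
    rw [hdec s]
    calc |W s + ht s| ≤ |W s| + |ht s| := abs_add_le _ _
      _ ≤ spanSN h / 2 + spanSN h / 2 :=
          add_le_add (le_trans (abs_le_supNorm W s) hWb) (le_trans (abs_le_supNorm ht s) hht)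
      _ = spanSN h := by ring
  constructor
  · intro s
    have e : g - (1 - γ) * V s = (1 - γ) * -(V s - g / (1 - γ)) := by
      field_simp; ring
    rw [e, abs_mul, abs_of_nonneg hγ.le, abs_neg]
    have := hpt s
    nlinarith [hspan]
  · apply supNorm_le
    intro s
    have e : ((g / (1 - γ)) • (1 : S → ℝ) - V) s = -(V s - g / (1 - γ)) := by
      simp only [Pi.sub_apply, Pi.smul_apply, Pi.one_apply, smul_eq_mul, mul_one]
      ring
    rw [e, abs_neg]
    have := hpt s
    linarith [hspan]
end

section
/- Let (Ω, μ) be a probability space equipped with a filtration (𝔉_k)_{k ∈ ℕ}, let n ∈ ℕ, and let ζ_0, …, ζ_n : Ω → ℝ with ζ_k measurable with respect to 𝔉_k. Let ε > 0, α > 0, and let (c_k) be positive reals with 2 * ∑_{k=0}^∞ 1/c_k ≤ 1. Assume that for every k ≤ n and every λ ∈ ℝ, exp(λ * ζ_k) is integrable and, μ-almost everywhere, the conditional expectation satisfies E[ exp(λ * ζ_k) | 𝔉_{k−1} ] ≤ exp( λ² * ε² / (2 * α * c_k) ) (for k = 0 this is the bound E[exp(λ ζ_0)] ≤ exp(λ²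 ε²/(2 α c_0)) on the plain expectation). Then μ( { ω | |∑_{k=0}^n ζ_k(ω)| ≥ ε } ) ≤ 2 * exp(−α). -/
open MeasureTheory Finset

/-- Martingale concentration core of the paper's Proposition 1: under conditional
sub-Gaussian moment-generating-function bounds with parameters `ε²/(α c_k)`, the sum
`∑_{k=0}^n ζ_k` exceeds `ε` in absolute value with probability at most `2 exp(−α)`. -/
theorem stmt14 {Ω : Type*} [m0 : MeasurableSpace Ω]
    (μ : Measure Ω) [IsProbabilityMeasure μ]
    (F : Filtration ℕ m0) (n : ℕ) (ζ : ℕ → Ω → ℝ)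
    (hmeas : ∀ k ≤ n, Measurable[F k] (ζ k))
    (ε α : ℝ) (hε : 0 < ε) (hα : 0 < α)
    (c : ℕ → ℝ) (hc : ∀ k, 0 < c k)
    (hsummable : Summable fun k => 1 / c k)
    (hcsum : 2 * (∑' k, 1 / c k) ≤ 1)
    (hint : ∀ k ≤ n, ∀ t : ℝ, Integrable (fun ω => Real.exp (t * ζ k ω)) μ)
    (h0 : ∀ t : ℝ,
      (∫ ω, Real.exp (t * ζ 0 ω) ∂μ) ≤ Real.exp (t ^ 2 * ε ^ 2 / (2 * α * c 0)))
    (hcond : ∀ k, 1 ≤ k → k ≤ n → ∀ t : ℝ,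
      ∀ᵐ ω ∂μ, (μ[fun ω' => Real.exp (t * ζ k ω') | F (k - 1)]) ω ≤
        Real.exp (t ^ 2 * ε ^ 2 / (2 * α * c k))) :
    μ {ω | ε ≤ |∑ k ∈ Finset.range (n + 1), ζ k ω|} ≤
      ENNReal.ofReal (2 * Real.exp (-α)) := by
  set S : ℕ → Ω → ℝ := fun m ω => ∑ k ∈ Finset.range (m + 1), ζ k ω with hSdef
  have hζm : ∀ k ≤ n, Measurable (ζ k) := fun k hk => (hmeas k hk).mono (F.le k) le_rfl
  have hSmeas : ∀ m ≤ n, Measurable (S m) := by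
    intro m hm
    exact Finset.measurable_sum _ fun k hk =>
      hζm k (le_trans (Nat.lt_succ_iff.mp (Finset.mem_range.mp hk)) hm)
  -- integrability of exp(t * S m)
  have hintS : ∀ m ≤ n, ∀ t : ℝ, Integrable (fun ω => Real.exp (t * S m ω)) μ := by
    intro m hm t
    have hmeasE : AEStronglyMeasurable (fun ω => Real.exp (t * S m ω)) μ :=
      (Real.measurable_exp.comp ((hSmeas m hm).const_mul t)).aestronglyMeasurable
    have hdom : Integrable
        (fun ω => ∑ k ∈ Finset.range (m + 1),
          ((m : ℝ) + 1)⁻¹ * Real.exp ((((m : ℝ) + 1) * t) * ζ k ω)) μ := by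
      apply integrable_finset_sum
      intro k hk
      exact (hint k (le_trans (Nat.lt_succ_iff.mp (Finset.mem_range.mp hk)) hm)
        (((m : ℝ) + 1) * t)).const_mul _
    refine hdom.mono' hmeasE (Filter.Eventually.of_forall fun ω => ?_)
    rw [Real.norm_eq_abs, abs_of_pos (Real.exp_pos _)]
    have hne : ((m : ℝ) + 1) ≠ 0 := by positivity
    have h := convexOn_exp.map_sum_le (t := Finset.range (m + 1))
      (w := fun _ => ((m : ℝ) + 1)⁻¹) (p := fun k => (((m : ℝ) + 1) * t) * ζ k ω)
      (fun i _ => by positivity)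
      (by simp [Finset.sum_const, Finset.card_range]; field_simp)
      (fun i _ => Set.mem_univ _)
    have heq : (∑ k ∈ Finset.range (m + 1),
        ((m : ℝ) + 1)⁻¹ • ((((m : ℝ) + 1) * t) * ζ k ω)) = t * S m ω := by
      simp only [smul_eq_mul, hSdef, Finset.mul_sum]
      refine Finset.sum_congr rfl fun k _ => ?_
      field_simp
    rw [heq] at h
    simpa [smul_eq_mul] using h
  -- key MGF bound by induction
  have key : ∀ m, m ≤ n → ∀ t : ℝ,
      (∫ ω, Real.exp (t * S m ω) ∂μ) ≤
        Real.exp (t ^ 2 * ε ^ 2 / (2 * α) * ∑ k ∈ Finset.range (m + 1), 1 / c k) := by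
    intro m
    induction m with
    | zero =>
      intro _ t
      have := h0 t
      have heq : t ^ 2 * ε ^ 2 / (2 * α * c 0)
          = t ^ 2 * ε ^ 2 / (2 * α) * ∑ k ∈ Finset.range 1, 1 / c k := by
        rw [Finset.sum_range_one]
        ring
      rw [← heq]
      simpa [hSdef, Finset.sum_range_one] using this
    | succ m ih =>
      intro h t
      have hm : m ≤ n := le_trans (Nat.le_succ m) h
      have hsplit : ∀ ω, Real.exp (t * S (m + 1) ω)
          = Real.exp (t * S m ω) * Real.exp (t * ζ (m + 1) ω) := by
        intro ω
        rw [← Real.exp_add]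
        congr 1
        simp only [hSdef, Finset.sum_range_succ]
        ring
      have hFS : StronglyMeasurable[F m] (fun ω => Real.exp (t * S m ω)) := by
        refine Measurable.stronglyMeasurable ?_
        refine Real.measurable_exp.comp (Measurable.const_mul ?_ t)
        exact Finset.measurable_sum _ fun k hk =>
          (hmeas k (le_trans (Nat.lt_succ_iff.mp (Finset.mem_range.mp hk)) hm)).mono
            (F.mono (Nat.lt_succ_iff.mp (Finset.mem_range.mp hk))) le_rfl
      have hg : Integrable (fun ω => Real.exp (t * ζ (m + 1) ω)) μ := hint (m + 1) h t
      have hprod : Integrable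
          ((fun ω => Real.exp (t * S m ω)) * fun ω => Real.exp (t * ζ (m + 1) ω)) μ := by
        refine (hintS (m + 1) h t).congr (Filter.Eventually.of_forall fun ω => ?_)
        exact (hsplit ω)
      have hpull := condExp_mul_of_stronglyMeasurable_left (μ := μ) hFS hprod hg
      have hcnd := hcond (m + 1) (Nat.le_add_left 1 m) h t
      have hint1 : Integrable
          (fun ω => Real.exp (t * S m ω) *
            (μ[fun ω' => Real.exp (t * ζ (m + 1) ω') | F m]) ω) μ :=
        integrable_condExp.congr hpull
      have hint2 : Integrable
          (fun ω => Real.exp (t * S m ω) *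
            Real.exp (t ^ 2 * ε ^ 2 / (2 * α * c (m + 1)))) μ :=
        (hintS m hm t).mul_const _
      calc ∫ ω, Real.exp (t * S (m + 1) ω) ∂μ
          = ∫ ω, (μ[(fun ω => Real.exp (t * S m ω)) *
              (fun ω => Real.exp (t * ζ (m + 1) ω)) | F m]) ω ∂μ := by
            rw [integral_condExp (F.le m)]
            exact integral_congr_ae (Filter.Eventually.of_forall fun ω => hsplit ω)
        _ = ∫ ω, Real.exp (t * S m ω) *
              (μ[fun ω' => Real.exp (t * ζ (m + 1) ω') | F m]) ω ∂μ :=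
            integral_congr_ae hpull
        _ ≤ ∫ ω, Real.exp (t * S m ω) *
              Real.exp (t ^ 2 * ε ^ 2 / (2 * α * c (m + 1))) ∂μ := by
            refine integral_mono_ae hint1 hint2 ?_
            filter_upwards [hcnd] with ω hω
            exact mul_le_mul_of_nonneg_left hω (Real.exp_pos _).le
        _ = Real.exp (t ^ 2 * ε ^ 2 / (2 * α * c (m + 1))) *
              ∫ ω, Real.exp (t * S m ω) ∂μ := by
            rw [integral_mul_const]; ring
        _ ≤ Real.exp (t ^ 2 * ε ^ 2 / (2 * α * c (m + 1))) *
              Real.exp (t ^ 2 * ε ^ 2 / (2 * α) * ∑ k ∈ Finset.range (m + 1), 1 / c k) :=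
            mul_le_mul_of_nonneg_left (ih hm t) (Real.exp_pos _).le
        _ = Real.exp (t ^ 2 * ε ^ 2 / (2 * α) *
              ∑ k ∈ Finset.range (m + 1 + 1), 1 / c k) := by
            rw [← Real.exp_add]
            congr 1
            conv_rhs => rw [Finset.sum_range_succ]
            ring
  -- set up Chernoff
  set Ssum : ℝ := ∑ k ∈ Finset.range (n + 1), 1 / c k with hSsumdef
  have hSsumpos : 0 < Ssum := by
    refine Finset.sum_pos (fun k _ => one_div_pos.mpr (hc k)) ⟨0, Finset.mem_range.mpr (Nat.succ_pos n)⟩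
  have hSsumle : Ssum ≤ 1 / 2 := by
    have h1 : Ssum ≤ ∑' k, 1 / c k :=
      Summable.sum_le_tsum (Finset.range (n + 1)) (fun k _ => (one_div_pos.mpr (hc k)).le) hsummable
    linarith
  set t₀ : ℝ := α / (ε * Ssum) with ht₀def
  have ht₀pos : 0 < t₀ := div_pos hα (mul_pos hε hSsumpos)
  have hexp_le : Real.exp (-t₀ * ε) * Real.exp (t₀ ^ 2 * ε ^ 2 / (2 * α) * Ssum)
      ≤ Real.exp (-α) := by
    rw [← Real.exp_add, Real.exp_le_exp]
    have hval : -t₀ * ε + t₀ ^ 2 * ε ^ 2 / (2 * α) * Ssum = -(α / (2 * Ssum)) := by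
      rw [ht₀def]
      field_simp
      ring
    rw [hval]
    have : α ≤ α / (2 * Ssum) := by
      rw [le_div_iff₀ (mul_pos two_pos hSsumpos)]
      nlinarith
    linarith
  have hexpnn : (0 : ℝ) ≤ Real.exp (-α) := (Real.exp_pos _).le
  -- upper tail
  have hupper : μ {ω | ε ≤ S n ω} ≤ ENNReal.ofReal (Real.exp (-α)) := by
    rw [ENNReal.le_ofReal_iff_toReal_le (measure_ne_top μ _) hexpnn]
    refine le_trans (ProbabilityTheory.measure_ge_le_exp_mul_mgf ε ht₀pos.le
      (hintS n le_rfl t₀)) ?_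
    refine le_trans ?_ hexp_le
    have hmgf : ProbabilityTheory.mgf (S n) μ t₀ ≤
        Real.exp (t₀ ^ 2 * ε ^ 2 / (2 * α) * Ssum) := key n le_rfl t₀
    exact mul_le_mul_of_nonneg_left hmgf (Real.exp_pos _).le
  -- lower tail
  have hlowint : Integrable (fun ω => Real.exp (t₀ * (-S n ω))) μ := by
    refine (hintS n le_rfl (-t₀)).congr (Filter.Eventually.of_forall fun ω => ?_)
    ring_nf
  have hlower : μ {ω | ε ≤ -S n ω} ≤ ENNReal.ofReal (Real.exp (-α)) := by
    rw [ENNReal.le_ofReal_iff_toReal_le (measure_ne_top μ _) hexpnn]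
    refine le_trans (ProbabilityTheory.measure_ge_le_exp_mul_mgf (X := fun ω => -S n ω)
      ε ht₀pos.le hlowint) ?_
    refine le_trans ?_ hexp_le
    have hmgf : ProbabilityTheory.mgf (fun ω => -S n ω) μ t₀ ≤
        Real.exp (t₀ ^ 2 * ε ^ 2 / (2 * α) * Ssum) := by
      have := key n le_rfl (-t₀)
      have heq : ProbabilityTheory.mgf (fun ω => -S n ω) μ t₀
          = ∫ ω, Real.exp (-t₀ * S n ω) ∂μ := by
        unfold ProbabilityTheory.mgf
        refine integral_congr_ae (Filter.Eventually.of_forall fun ω => ?_)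
        ring_nf
      rw [heq]
      calc ∫ ω, Real.exp (-t₀ * S n ω) ∂μ
          ≤ Real.exp ((-t₀) ^ 2 * ε ^ 2 / (2 * α) * Ssum) := this
        _ = Real.exp (t₀ ^ 2 * ε ^ 2 / (2 * α) * Ssum) := by rw [neg_pow]; ring_nf
    exact mul_le_mul_of_nonneg_left hmgf (Real.exp_pos _).le
  -- combine
  have hsub : {ω | ε ≤ |S n ω|} ⊆ {ω | ε ≤ S n ω} ∪ {ω | ε ≤ -S n ω} := by
    intro ω hω
    simp only [Set.mem_setOf_eq] at hω ⊢
    rcases le_abs.mp hω with h | h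
    · exact Or.inl h
    · exact Or.inr h
  calc μ {ω | ε ≤ |∑ k ∈ Finset.range (n + 1), ζ k ω|}
      ≤ μ ({ω | ε ≤ S n ω} ∪ {ω | ε ≤ -S n ω}) := measure_mono hsub
    _ ≤ μ {ω | ε ≤ S n ω} + μ {ω | ε ≤ -S n ω} := measure_union_le _ _
    _ ≤ ENNReal.ofReal (Real.exp (-α)) + ENNReal.ofReal (Real.exp (-α)) :=
        add_le_add hupper hlower
    _ = ENNReal.ofReal (2 * Real.exp (-α)) := by
        rw [← ENNReal.ofReal_add hexpnn hexpnn]; ring_nf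
end

section
/- Assume the Halpern setting: Q* : S × A → ℝ and g* ∈ ℝ satisfy 𝒯 Q* = Q* + g* • 1, ε ≥ 0, n ∈ ℕ, and sequences Q, T : ℕ → (S × A → ℝ) satisfy Q k = (2/(k+2)) • Q 0 + (k/(k+2)) • T (k−1) for all 1 ≤ k ≤ n and ‖T k − 𝒯 (Q k)‖∞ ≤ ε for all 0 ≤ k ≤ n. Then for every k with 0 ≤ k ≤ n: Sp(Q k − Q*) ≤ Sp(Q 0 − Q*) + (2/3) * ε * k. -/
open Finset

section helpers
variable {X : Type*} [Fintype X] [Nonempty X]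

lemma spanSN_le (v : X → ℝ) (c m : ℝ) (hc : ∀ x, v x ≤ c) (hm : ∀ x, m ≤ v x) :
    spanSN v ≤ c - m := by
  unfold spanSN
  have h1 : Finset.univ.sup' Finset.univ_nonempty v ≤ c := Finset.sup'_le _ _ fun x _ => hc x
  have h2 : m ≤ Finset.univ.inf' Finset.univ_nonempty v := Finset.le_inf' _ _ fun x _ => hm x
  linarith

lemma le_sup'_univ (v : X → ℝ) (x : X) : v x ≤ Finset.univ.sup' Finset.univ_nonempty v :=
  Finset.le_sup' v (Finset.mem_univ x)

lemma inf'_univ_le (v : X → ℝ) (x : X) : Finset.univ.inf' Finset.univ_nonempty v ≤ v x :=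
  Finset.inf'_le v (Finset.mem_univ x)

lemma spanSN_add_le (u v : X → ℝ) : spanSN (u + v) ≤ spanSN u + spanSN v := by
  have := spanSN_le (u + v)
    (Finset.univ.sup' Finset.univ_nonempty u + Finset.univ.sup' Finset.univ_nonempty v)
    (Finset.univ.inf' Finset.univ_nonempty u + Finset.univ.inf' Finset.univ_nonempty v)
    (fun x => add_le_add (le_sup'_univ u x) (le_sup'_univ v x))
    (fun x => add_le_add (inf'_univ_le u x) (inf'_univ_le v x))
  unfold spanSN at *
  linarith

lemma spanSN_smul_le (c : ℝ) (hc : 0 ≤ c) (v : X → ℝ) : spanSN (c • v) ≤ c * spanSN v := by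
  have := spanSN_le (c • v)
    (c * Finset.univ.sup' Finset.univ_nonempty v)
    (c * Finset.univ.inf' Finset.univ_nonempty v)
    (fun x => mul_le_mul_of_nonneg_left (le_sup'_univ v x) hc)
    (fun x => mul_le_mul_of_nonneg_left (inf'_univ_le v x) hc)
  unfold spanSN at *
  linarith [this, mul_sub c (Finset.univ.sup' Finset.univ_nonempty v)
    (Finset.univ.inf' Finset.univ_nonempty v)]

lemma spanSN_const (g : ℝ) : spanSN (g • (1 : X → ℝ)) = 0 := by
  unfold spanSN
  simp [Pi.smul_apply, Pi.one_apply]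

lemma spanSN_le_two_supNorm (v : X → ℝ) : spanSN v ≤ 2 * supNorm v := by
  have := spanSN_le v (supNorm v) (-(supNorm v))
    (fun x => le_trans (le_abs_self _) (le_sup'_univ (fun x => |v x|) x))
    (fun x => by
      have := le_sup'_univ (fun x => |v x|) x
      have := neg_abs_le (v x)
      unfold supNorm
      linarith)
  linarith

end helpers

section sigmalem
variable {S A : Type*} [Fintype S] [Nonempty S]

lemma sigma'_le_add (P : S → A → Set (S → ℝ)) (hne : ∀ s a, (P s a).Nonempty)
    (hsub : ∀ s a, P s a ⊆ stdSimplex ℝ S) (h h' : S → ℝ) (c : ℝ)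
    (hc : ∀ s', h s' ≤ h' s' + c) (s : S) (a : A) :
    sigma' P h s a ≤ sigma' P h' s a + c := by
  have key : ∀ (p : S → ℝ), p ∈ P s a → ∀ (f : S → ℝ),
      Finset.univ.inf' Finset.univ_nonempty f ≤ ∑ s', p s' * f s' := by
    intro p hp f
    obtain ⟨hpos, hsum⟩ := hsub s a hp
    have : ∀ s' ∈ Finset.univ, p s' * Finset.univ.inf' Finset.univ_nonempty f ≤ p s' * f s' :=
      fun s' _ => mul_le_mul_of_nonneg_left (inf'_univ_le f s') (hpos s')
    calc Finset.univ.inf' Finset.univ_nonempty f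
        = ∑ s', p s' * Finset.univ.inf' Finset.univ_nonempty f := by
          rw [← Finset.sum_mul, hsum, one_mul]
      _ ≤ ∑ s', p s' * f s' := Finset.sum_le_sum this
  have hbdd : BddBelow {x : ℝ | ∃ p ∈ P s a, x = ∑ s', p s' * h s'} := by
    refine ⟨Finset.univ.inf' Finset.univ_nonempty h, ?_⟩
    rintro x ⟨p, hp, rfl⟩
    exact key p hp h
  rw [← sub_le_iff_le_add]
  apply le_csInf
  · obtain ⟨p, hp⟩ := hne s a
    exact ⟨_, p, hp, rfl⟩
  · rintro x ⟨p, hp, rfl⟩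
    rw [sub_le_iff_le_add]
    have h1 : sigma' P h s a ≤ ∑ s', p s' * h s' := csInf_le hbdd ⟨p, hp, rfl⟩
    have h2 : ∑ s', p s' * h s' ≤ (∑ s', p s' * h' s') + c := by
      obtain ⟨hpos, hsum⟩ := hsub s a hp
      have : ∀ s' ∈ Finset.univ, p s' * h s' ≤ p s' * h' s' + p s' * c := by
        intro s' _
        rw [← mul_add]
        exact mul_le_mul_of_nonneg_left (hc s') (hpos s')
      calc ∑ s', p s' * h s' ≤ ∑ s', (p s' * h' s' + p s' * c) := Finset.sum_le_sum this
        _ = (∑ s', p s' * h' s') + (∑ s', p s') * c := by rw [Finset.sum_add_distrib, Finset.sum_mul]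
        _ = (∑ s', p s' * h' s') + c := by rw [hsum, one_mul]
    linarith

end sigmalem

lemma bellman_span_nonexpansive {S A : Type*} [Fintype S] [Fintype A] [Nonempty S] [Nonempty A]
    (P : S → A → Set (S → ℝ)) (hne : ∀ s a, (P s a).Nonempty)
    (hsub : ∀ s a, P s a ⊆ stdSimplex ℝ S) (r : S → A → ℝ) (Q Q' : S × A → ℝ) :
    spanSN (bellman P r Q - bellman P r Q') ≤ spanSN (Q - Q') := by
  set c := Finset.univ.sup' Finset.univ_nonempty (Q - Q') with hcdef
  set m := Finset.univ.inf' Finset.univ_nonempty (Q - Q') with hmdef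
  set MQ : (S × A → ℝ) → S → ℝ :=
    fun J s' => Finset.univ.sup' Finset.univ_nonempty fun a' => J (s', a') with hMQ
  have hup : ∀ s', MQ Q s' ≤ MQ Q' s' + c := by
    intro s'
    apply Finset.sup'_le
    intro a' _
    have h1 : Q (s', a') - Q' (s', a') ≤ c := le_sup'_univ (Q - Q') (s', a')
    have h2 : Q' (s', a') ≤ MQ Q' s' := le_sup'_univ (fun a' => Q' (s', a')) a'
    linarith
  have hdown : ∀ s', MQ Q' s' ≤ MQ Q s' + -m := by
    intro s'
    apply Finset.sup'_le
    intro a' _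
    have h1 : m ≤ Q (s', a') - Q' (s', a') := inf'_univ_le (Q - Q') (s', a')
    have h2 : Q (s', a') ≤ MQ Q s' := le_sup'_univ (fun a' => Q (s', a')) a'
    linarith
  have key : ∀ sa : S × A, (bellman P r Q - bellman P r Q') sa ≤ c ∧
      m ≤ (bellman P r Q - bellman P r Q') sa := by
    intro sa
    have h1 : sigma' P (MQ Q) sa.1 sa.2 ≤ sigma' P (MQ Q') sa.1 sa.2 + c :=
      sigma'_le_add P hne hsub _ _ c hup sa.1 sa.2
    have h2 : sigma' P (MQ Q') sa.1 sa.2 ≤ sigma' P (MQ Q) sa.1 sa.2 + -m :=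
      sigma'_le_add P hne hsub _ _ (-m) hdown sa.1 sa.2
    simp only [Pi.sub_apply, bellman]
    constructor <;> [linarith; linarith]
  exact spanSN_le (bellman P r Q - bellman P r Q') c m
    (fun sa => (key sa).1) (fun sa => (key sa).2)


/-- Paper's Lemma A2: span bound on the iterates of Robust Halpern Iteration with
inexact operator evaluations. -/
theorem stmt15 {S A : Type*} [Fintype S] [Fintype A] [Nonempty S] [Nonempty A]
    (P : S → A → Set (S → ℝ))
    (hne : ∀ s a, (P s a).Nonempty)
    (hsub : ∀ s a, P s a ⊆ stdSimplex ℝ S)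
    (r : S → A → ℝ)
    (Qstar : S × A → ℝ) (gstar : ℝ)
    (hstar : bellman P r Qstar = Qstar + gstar • (1 : S × A → ℝ))
    (ε : ℝ) (hε : 0 ≤ ε) (n : ℕ)
    (Q T : ℕ → (S × A → ℝ))
    (hrec : ∀ k, 1 ≤ k → k ≤ n →
      Q k = (2 / ((k : ℝ) + 2)) • Q 0 + ((k : ℝ) / ((k : ℝ) + 2)) • T (k - 1))
    (happrox : ∀ k ≤ n, supNorm (T k - bellman P r (Q k)) ≤ ε) :
    ∀ k ≤ n, spanSN (Q k - Qstar) ≤ spanSN (Q 0 - Qstar) + (2 / 3) * ε * (k : ℝ) := by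
  intro k
  induction k with
  | zero => intro _; simp
  | succ k ih =>
    intro hkn
    have hkn' : k ≤ n := Nat.le_of_succ_le hkn
    have IH := ih hkn'
    have hk3 : (0:ℝ) < (k : ℝ) + 3 := by positivity
    set a : ℝ := 2 / ((k : ℝ) + 3) with ha
    set b : ℝ := ((k : ℝ) + 1) / ((k : ℝ) + 3) with hb
    have ha0 : 0 ≤ a := by positivity
    have hb0 : 0 ≤ b := by positivity
    have hab : a + b = 1 := by rw [ha, hb]; field_simp; ring
    have hQ : Q (k + 1) = a • Q 0 + b • T k := by
      have := hrec (k + 1) (Nat.le_add_left 1 k) hkn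
      simpa [ha, hb, Nat.cast_add, Nat.cast_one, add_assoc, show ((k:ℝ) + 1 + 2) = (k:ℝ) + 3 by ring,
        Nat.add_sub_cancel] using this
    -- decompose T k - Qstar
    have hTdec : T k - Qstar =
        (T k - bellman P r (Q k)) +
        ((bellman P r (Q k) - bellman P r Qstar) + gstar • (1 : S × A → ℝ)) := by
      funext sa
      have h := congrFun hstar sa
      simp only [Pi.add_apply, Pi.sub_apply, Pi.smul_apply, Pi.one_apply, smul_eq_mul] at h ⊢
      linarith
    have hT : spanSN (T k - Qstar) ≤ 2 * ε + spanSN (Q k - Qstar) := by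
      calc spanSN (T k - Qstar)
          ≤ spanSN (T k - bellman P r (Q k)) +
            spanSN ((bellman P r (Q k) - bellman P r Qstar) + gstar • (1 : S × A → ℝ)) := by
            rw [hTdec]; exact spanSN_add_le _ _
        _ ≤ 2 * ε + (spanSN (bellman P r (Q k) - bellman P r Qstar) + spanSN (gstar • (1 : S × A → ℝ))) := by
            have h1 := spanSN_le_two_supNorm (T k - bellman P r (Q k))
            have h2 := happrox k hkn'
            have h3 := spanSN_add_le (bellman P r (Q k) - bellman P r Qstar) (gstar • (1 : S × A → ℝ))
            linarith
        _ ≤ 2 * ε + spanSN (Q k - Qstar) := by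
            rw [spanSN_const]
            have := bellman_span_nonexpansive P hne hsub r (Q k) Qstar
            linarith
    have hQdec : Q (k + 1) - Qstar = a • (Q 0 - Qstar) + b • (T k - Qstar) := by
      rw [hQ]
      funext sa
      simp only [Pi.add_apply, Pi.sub_apply, Pi.smul_apply, smul_eq_mul]
      linear_combination Qstar sa * hab
    have step : spanSN (Q (k + 1) - Qstar) ≤ a * spanSN (Q 0 - Qstar) + b * spanSN (T k - Qstar) := by
      rw [hQdec]
      calc spanSN (a • (Q 0 - Qstar) + b • (T k - Qstar))
          ≤ spanSN (a • (Q 0 - Qstar)) + spanSN (b • (T k - Qstar)) := spanSN_add_le _ _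
        _ ≤ a * spanSN (Q 0 - Qstar) + b * spanSN (T k - Qstar) :=
            add_le_add (spanSN_smul_le a ha0 _) (spanSN_smul_le b hb0 _)
    have hfin : a * spanSN (Q 0 - Qstar) + b * (2 * ε + (spanSN (Q 0 - Qstar) + (2/3) * ε * k))
        = spanSN (Q 0 - Qstar) + (2/3) * ε * ((k : ℕ) + 1 : ℝ) := by
      rw [ha, hb]
      field_simp
      ring
    have hbmono : b * spanSN (T k - Qstar) ≤ b * (2 * ε + (spanSN (Q 0 - Qstar) + (2/3) * ε * k)) := by
      apply mul_le_mul_of_nonneg_left _ hb0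
      linarith
    push_cast
    linarith [step, hbmono, hfin.le]
end
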